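/- arXiv:2408.12785 — 2 statements merged into one kernel-verified Lean document; each statement's English description precedes it below -/
import Mathlib

section
/- Let A ⊆ ℕ. The following are equivalent: (1) A is dynamically syndetic; (2) there exists a nonempty subset B ⊆ A such that for every finite subset F ⊆ B the set ⋂_{f ∈ F} (B − f) is syndetic; (3) there exists n ∈ ℕ such that A − n belongs to a syndetic, idempotent filter on ℕ. -/
open Set

/-- `A − n` computed inside the positive integers. -/
def shiftN (A : Set ℕ+) (n : ℕ+) : Set ℕ+ := {m : ℕ+ | m + n ∈ A}

/-- `A − B := ⋃_{b ∈ B} (A − b)`. -/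
def shiftSet (A B : Set ℕ+) : Set ℕ+ := ⋃ b ∈ B, shiftN A b

/-- A set of positive integers is syndetic if `A ∪ (A−1) ∪ ⋯ ∪ (A−N) = ℕ` for some `N`. -/
def Syndetic (A : Set ℕ+) : Prop :=
  ∃ N : ℕ+, (A ∪ ⋃ k ∈ {k : ℕ+ | k ≤ N}, shiftN A k) = Set.univ

/-- A set of positive integers is thick if it contains a translate of every finite set. -/
def Thick (A : Set ℕ+) : Prop :=
  ∀ F : Finset ℕ+, ∃ n : ℕ+, ∀ f ∈ F, f + n ∈ A

/-- Piecewise syndetic: some finite union of translates `A ∪ (A−1) ∪ ⋯ ∪ (A−N)` is thick. -/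
def PiecewiseSyndetic (A : Set ℕ+) : Prop :=
  ∃ N : ℕ+, Thick (A ∪ ⋃ k ∈ {k : ℕ+ | k ≤ N}, shiftN A k)

/-- A self-map of a topological space is minimal if every forward orbit
`{T^n x | n ∈ ℕ, n ≥ 1}` is dense. -/
def MinimalMap {X : Type} [TopologicalSpace X] (T : X → X) : Prop :=
  ∀ x : X, Dense (Set.range fun n : ℕ+ => T^[(n : ℕ)] x)

/-- A minimal topological dynamical system: a nonempty compact metric space together with a
continuous map all of whose forward orbits are dense. -/
structure MinSystem : Type 1 where
  X : Type
  [met : MetricSpace X]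
  [cpt : CompactSpace X]
  [nem : Nonempty X]
  T : X → X
  cont : Continuous T
  minimal : MinimalMap T

attribute [instance] MinSystem.met MinSystem.cpt MinSystem.nem

/-- `R(x,U)`: the set of (positive) return times of `x` to `U`. -/
def retTimes {X : Type} (T : X → X) (x : X) (U : Set X) : Set ℕ+ :=
  {n : ℕ+ | T^[(n : ℕ)] x ∈ U}

/-- Dynamically syndetic sets. -/
def DynSyndetic (A : Set ℕ+) : Prop :=
  ∃ (S : MinSystem) (x : S.X) (U : Set S.X),
    IsOpen U ∧ U.Nonempty ∧ retTimes S.T x U ⊆ A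

/-- Dynamically central syndetic sets. -/
def DynCentralSyndetic (A : Set ℕ+) : Prop :=
  ∃ (S : MinSystem) (x : S.X) (U : Set S.X),
    IsOpen U ∧ x ∈ U ∧ retTimes S.T x U ⊆ A

/-- Dynamically thick sets: `{T^n x | n ∈ A}` is dense for every minimal system and point. -/
def DynThick (A : Set ℕ+) : Prop :=
  ∀ (S : MinSystem) (x : S.X), Dense ((fun n : ℕ+ => S.T^[(n : ℕ)] x) '' A)

/-- Sets of (minimal topological) pointwise recurrence. -/
def PointwiseRecurrent (A : Set ℕ+) : Prop :=
  ∀ (S : MinSystem) (x : S.X) (U : Set S.X), IsOpen U → x ∈ U →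
    ∃ a ∈ A, S.T^[(a : ℕ)] x ∈ U

/-- A family: an upward-closed collection of subsets of the positive integers. -/
def UpwardClosed (F : Set (Set ℕ+)) : Prop :=
  ∀ ⦃A B : Set ℕ+⦄, A ∈ F → A ⊆ B → B ∈ F

/-- A filter (in the combinatorial sense): an upward-closed collection closed under
finite intersections. -/
def IsFilterFamily (F : Set (Set ℕ+)) : Prop :=
  UpwardClosed F ∧ ∀ ⦃A B : Set ℕ+⦄, A ∈ F → B ∈ F → A ∩ B ∈ F

/-- A family all of whose members are syndetic. -/
def SyndeticFamily (F : Set (Set ℕ+)) : Prop := ∀ A ∈ F, Syndetic A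

/-- `A − 𝔉 := {n | A − n ∈ 𝔉}`. -/
def famShift (A : Set ℕ+) (F : Set (Set ℕ+)) : Set ℕ+ := {n : ℕ+ | shiftN A n ∈ F}

/-- `𝔉 + 𝔊 := {A | A − 𝔊 ∈ 𝔉}`. -/
def famSum (F G : Set (Set ℕ+)) : Set (Set ℕ+) := {A : Set ℕ+ | famShift A G ∈ F}

/-- A family is idempotent if `𝔉 ⊆ 𝔉 + 𝔉`. -/
def IdempotentFamily (F : Set (Set ℕ+)) : Prop := F ⊆ famSum F F

/-- A proper family: nonempty and not containing the empty set. -/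
def ProperFamily (F : Set (Set ℕ+)) : Prop := F.Nonempty ∧ ∅ ∉ F



namespace DSCore

abbrev Lv := ℕ × Finset ℕ

section Core

variable (P : Set ℕ) (V : Finset ℕ → Set ℕ) (NN : Finset ℕ → ℕ)
variable (hV1 : ∀ F m, ∃ k, k ≤ NN F ∧ m + k ∈ V F)

/-- pick an element of `V F` in the window `[m, m + NN F]`. -/
noncomputable def pick (F : Finset ℕ) (m : ℕ) : ℕ := m + (hV1 F m).choose

lemma pick_ge (F : Finset ℕ) (m : ℕ) : m ≤ pick V NN hV1 F m := Nat.le_add_right _ _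

lemma pick_le (F : Finset ℕ) (m : ℕ) : pick V NN hV1 F m ≤ m + NN F :=
  Nat.add_le_add_left (hV1 F m).choose_spec.1 m

lemma pick_mem (F : Finset ℕ) (m : ℕ) : pick V NN hV1 F m ∈ V F :=
  (hV1 F m).choose_spec.2

end Core

section PickL
variable (NN : Finset ℕ → ℕ)

/-- a level `l` fits in an interval of length `d`. -/
def fits (d : ℕ) (l : Lv) : Prop := 1 ≤ l.1 ∧ l.1 + NN l.2 + 1 ≤ d

instance fits_dec (d : ℕ) (l : Lv) : Decidable (fits NN d l) := by
  unfold fits; infer_instance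

end PickL

/-- pick the fitting level with maximal length from a list. -/
def pickL (NN : Finset ℕ → ℕ) : List Lv → ℕ → Option Lv
  | [], _ => none
  | l :: ls, d =>
    match pickL NN ls d with
    | none => if fits NN d l then some l else none
    | some l' => if fits NN d l ∧ l'.1 ≤ l.1 then some l else some l'

section PickL2
variable (NN : Finset ℕ → ℕ)

lemma pickL_mem : ∀ (ls : List Lv) (d : ℕ) (l : Lv), pickL NN ls d = some l →
    l ∈ ls ∧ fits NN d l := by
  intro ls
  induction ls with
  | nil => intro d l h; simp [pickL] at h
  | cons a ls ih =>
    intro d l h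
    rw [pickL] at h
    rcases heq : pickL NN ls d with _ | l'
    all_goals rw [heq] at h
    · have h' : (if fits NN d a then some a else none) = some l := h
      by_cases hf : fits NN d a
      · rw [if_pos hf] at h'
        cases h'
        exact ⟨List.mem_cons_self, hf⟩
      · rw [if_neg hf] at h'; cases h'
    · have h' : (if fits NN d a ∧ l'.1 ≤ a.1 then some a else some l') = some l := h
      by_cases hf : fits NN d a ∧ l'.1 ≤ a.1
      · rw [if_pos hf] at h'
        cases h'
        exact ⟨List.mem_cons_self, hf.1⟩
      · rw [if_neg hf] at h'
        cases h'
        obtain ⟨h1, h2⟩ := ih d _ heq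
        exact ⟨List.mem_cons_of_mem _ h1, h2⟩

lemma pickL_max : ∀ (ls : List Lv) (d : ℕ) (l₀ : Lv), l₀ ∈ ls → fits NN d l₀ →
    ∃ l, pickL NN ls d = some l ∧ l₀.1 ≤ l.1 := by
  intro ls
  induction ls with
  | nil => intro d l₀ h; simp at h
  | cons a ls ih =>
    intro d l₀ hmem hfit
    rcases heq : pickL NN ls d with _ | l'
    · -- tail gives none: l₀ must be a
      rcases List.mem_cons.1 hmem with rfl | hmem'
      · rw [pickL, heq]
        show ∃ l, (if fits NN d l₀ then some l₀ else none) = some l ∧ l₀.1 ≤ l.1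
        rw [if_pos hfit]; exact ⟨l₀, rfl, le_refl _⟩
      · obtain ⟨l, hl, _⟩ := ih d l₀ hmem' hfit
        rw [hl] at heq; cases heq
    · rw [pickL, heq]
      show ∃ l, (if fits NN d a ∧ l'.1 ≤ a.1 then some a else some l') = some l ∧ l₀.1 ≤ l.1
      rcases List.mem_cons.1 hmem with rfl | hmem'
      · by_cases hc : fits NN d l₀ ∧ l'.1 ≤ l₀.1
        · rw [if_pos hc]; exact ⟨l₀, rfl, le_refl _⟩
        · have h2 : ¬ l'.1 ≤ l₀.1 := fun h => hc ⟨hfit, h⟩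
          rw [if_neg hc]
          exact ⟨l', rfl, le_of_not_ge h2⟩
      · obtain ⟨l, hl, hle⟩ := ih d l₀ hmem' hfit
        rw [hl] at heq; cases heq
        by_cases hc : fits NN d a ∧ l'.1 ≤ a.1
        · rw [if_pos hc]; exact ⟨a, rfl, le_trans hle hc.2⟩
        · rw [if_neg hc]; exact ⟨l', rfl, hle⟩

end PickL2

section Core2
variable (P : Set ℕ) (V : Finset ℕ → Set ℕ) (NN : Finset ℕ → ℕ)
variable (hV1 : ∀ F m, ∃ k, k ≤ NN F ∧ m + k ∈ V F)

/-- the filling procedure, with fuel. -/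
noncomputable def fillAux : ℕ → ℕ → ℕ → List Lv → List (ℕ × Lv)
  | 0, _, _, _ => []
  | (fuel+1), s, e, lvs =>
    match pickL NN lvs (e - s) with
    | none => []
    | some l =>
      let t := pick V NN hV1 l.2 s
      fillAux fuel s t lvs ++ (t, l) :: fillAux fuel (t + l.1) e lvs

-- appended to core.lean content minus final "end Core2 / end DSCore"
/-- chain predicate: pastes are ordered, nonoverlapping, within `[s,e)`. -/
def OKl : ℕ → ℕ → List (ℕ × Lv) → Prop
  | s, e, [] => s ≤ e
  | s, e, (t, l) :: ps => s ≤ t ∧ OKl (t + l.1) e ps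

lemma okl_le : ∀ (ps : List (ℕ × Lv)) (s e : ℕ), OKl s e ps → s ≤ e := by
  intro ps
  induction ps with
  | nil => intro s e h; exact h
  | cons p ps ih =>
    rcases p with ⟨t, l⟩
    intro s e h
    exact le_trans (le_trans h.1 (Nat.le_add_right _ _)) (ih _ _ h.2)

lemma okl_mono_right : ∀ (ps : List (ℕ × Lv)) (s e e' : ℕ), OKl s e ps → e ≤ e' → OKl s e' ps := by
  intro ps
  induction ps with
  | nil => intro s e e' h he; exact le_trans h he
  | cons p ps ih =>
    rcases p with ⟨t, l⟩
    intro s e e' h he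
    exact ⟨h.1, ih _ _ _ h.2 he⟩

lemma okl_append : ∀ (ps₁ ps₂ : List (ℕ × Lv)) (s m e : ℕ),
    OKl s m ps₁ → OKl m e ps₂ → OKl s e (ps₁ ++ ps₂) := by
  intro ps₁
  induction ps₁ with
  | nil =>
    intro ps₂ s m e h1 h2
    simp only [List.nil_append]
    -- OKl s m [] means s ≤ m; need OKl s e ps₂ from OKl m e ps₂
    -- monotone in left endpoint
    induction ps₂ with
    | nil => exact le_trans h1 h2
    | cons p ps ih =>
      rcases p with ⟨t, l⟩
      exact ⟨le_trans h1 h2.1, h2.2⟩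
  | cons p ps ih =>
    rcases p with ⟨t, l⟩
    intro ps₂ s m e h1 h2
    exact ⟨h1.1, ih ps₂ _ m e h1.2 h2⟩

lemma okl_bounds : ∀ (ps : List (ℕ × Lv)) (s e : ℕ), OKl s e ps →
    ∀ p ∈ ps, s ≤ p.1 ∧ p.1 + p.2.1 ≤ e := by
  intro ps
  induction ps with
  | nil => intro s e _ p hp; simp at hp
  | cons q ps ih =>
    rcases q with ⟨t, l⟩
    intro s e h p hp
    rcases List.mem_cons.1 hp with rfl | hp'
    · exact ⟨h.1, okl_le _ _ _ h.2⟩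
    · obtain ⟨h1, h2⟩ := ih _ _ h.2 p hp'
      exact ⟨le_trans (le_trans h.1 (Nat.le_add_right _ _)) h1, h2⟩

lemma fill_mem : ∀ (fuel s e : ℕ) (lvs : List Lv), e - s ≤ fuel →
    ∀ p ∈ fillAux V NN hV1 fuel s e lvs,
      p.2 ∈ lvs ∧ p.1 ∈ V p.2.2 ∧ s ≤ p.1 ∧ p.1 + p.2.1 ≤ e ∧ 1 ≤ p.2.1 := by
  intro fuel
  induction fuel with
  | zero => intro s e lvs _ p hp; simp [fillAux] at hp
  | succ fuel ih =>
    intro s e lvs hfe p hp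
    rw [fillAux] at hp
    rcases heq : pickL NN lvs (e - s) with _ | l
    · rw [heq] at hp; simp at hp
    · rw [heq] at hp
      obtain ⟨hmem, hfit⟩ := pickL_mem NN lvs (e - s) l heq
      obtain ⟨hl1, hl2⟩ := hfit
      set t := pick V NN hV1 l.2 s with ht
      have hts : s ≤ t := pick_ge V NN hV1 l.2 s
      have htle : t ≤ s + NN l.2 := pick_le V NN hV1 l.2 s
      have hse : s ≤ e := by omega
      have htple : t + l.1 ≤ e := by omega
      have hfuel1 : t - s ≤ fuel := by omega
      have hfuel2 : e - (t + l.1) ≤ fuel := by omega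
      simp only [List.mem_append, List.mem_cons] at hp
      rcases hp with hp | hp | hp
      · obtain ⟨a1, a2, a3, a4, a5⟩ := ih s t lvs hfuel1 p hp
        exact ⟨a1, a2, a3, by omega, a5⟩
      · subst hp
        exact ⟨hmem, pick_mem V NN hV1 l.2 s, hts, htple, hl1⟩
      · obtain ⟨a1, a2, a3, a4, a5⟩ := ih (t + l.1) e lvs hfuel2 p hp
        exact ⟨a1, a2, le_trans (le_trans hts (Nat.le_add_right _ _)) a3, a4, a5⟩

lemma fill_ok : ∀ (fuel s e : ℕ) (lvs : List Lv), e - s ≤ fuel → s ≤ e →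
    OKl s e (fillAux V NN hV1 fuel s e lvs) := by
  intro fuel
  induction fuel with
  | zero => intro s e lvs _ hse; simpa [fillAux, OKl] using hse
  | succ fuel ih =>
    intro s e lvs hfe hse
    rw [fillAux]
    rcases heq : pickL NN lvs (e - s) with _ | l
    · exact hse
    · obtain ⟨hmem, hl1, hl2⟩ := pickL_mem NN lvs (e - s) l heq
      set t := pick V NN hV1 l.2 s with ht
      have hts : s ≤ t := pick_ge V NN hV1 l.2 s
      have htle : t ≤ s + NN l.2 := pick_le V NN hV1 l.2 s
      have htple : t + l.1 ≤ e := by omega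
      have hfuel1 : t - s ≤ fuel := by omega
      have hfuel2 : e - (t + l.1) ≤ fuel := by omega
      exact okl_append _ _ _ _ _ (ih s t lvs hfuel1 hts)
        ⟨le_refl t, ih (t + l.1) e lvs hfuel2 htple⟩

/-- apply a paste to a support set. -/
def applyP (F : Finset ℕ) (p : ℕ × Lv) : Finset ℕ := F ∪ p.2.2.image (· + p.1)

def applyPs : Finset ℕ → List (ℕ × Lv) → Finset ℕ := List.foldl applyP

@[simp] lemma applyPs_nil (F : Finset ℕ) : applyPs F [] = F := rfl

lemma applyPs_cons (F : Finset ℕ) (p : ℕ × Lv) (ps : List (ℕ × Lv)) :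
    applyPs F (p :: ps) = applyPs (applyP F p) ps := rfl

lemma applyPs_sub : ∀ (ps : List (ℕ × Lv)) (F : Finset ℕ), F ⊆ applyPs F ps := by
  intro ps
  induction ps with
  | nil => intro F; simp
  | cons p ps ih =>
    intro F
    rw [applyPs_cons]
    exact le_trans (Finset.subset_union_left) (ih _)

lemma applyPs_mem : ∀ (ps : List (ℕ × Lv)) (F : Finset ℕ) (k : ℕ),
    k ∈ applyPs F ps ↔ k ∈ F ∨ ∃ p ∈ ps, ∃ f ∈ p.2.2, k = f + p.1 := by
  intro ps
  induction ps with
  | nil => intro F k; simp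
  | cons p ps ih =>
    intro F k
    rw [applyPs_cons, ih]
    simp only [applyP, Finset.mem_union, Finset.mem_image, List.mem_cons]
    constructor
    · rintro ((h | ⟨f, hf, rfl⟩) | ⟨q, hq, f, hf, rfl⟩)
      · exact Or.inl h
      · exact Or.inr ⟨p, Or.inl rfl, f, hf, rfl⟩
      · exact Or.inr ⟨q, Or.inr hq, f, hf, rfl⟩
    · rintro (h | ⟨q, (rfl | hq), f, hf, rfl⟩)
      · exact Or.inl (Or.inl h)
      · exact Or.inl (Or.inr ⟨f, hf, rfl⟩)
      · exact Or.inr ⟨q, hq, f, hf, rfl⟩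

/-- low membership is unchanged. -/
lemma applyPs_low : ∀ (ps : List (ℕ × Lv)) (F : Finset ℕ) (s e k : ℕ),
    OKl s e ps → k < s → (k ∈ applyPs F ps ↔ k ∈ F) := by
  intro ps F s e k hok hk
  rw [applyPs_mem]
  constructor
  · rintro (h | ⟨p, hp, f, hf, rfl⟩)
    · exact h
    · have := (okl_bounds ps s e hok p hp).1
      omega
  · exact Or.inl

/-- window semantics: inside the interval of a paste `(t,l)`, membership is a copy of `l.2`. -/
lemma applyPs_window : ∀ (ps : List (ℕ × Lv)) (F : Finset ℕ) (s e : ℕ),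
    OKl s e ps → (∀ p ∈ ps, ∀ f ∈ p.2.2, f < p.2.1) → (∀ k ∈ F, k < s) →
    ∀ t l, (t, l) ∈ ps → ∀ k, k < l.1 → (t + k ∈ applyPs F ps ↔ k ∈ l.2) := by
  intro ps
  induction ps with
  | nil => intro F s e _ _ _ t l h; simp at h
  | cons q ps ih =>
    rcases q with ⟨t₀, l₀⟩
    intro F s e hok hrange hF t l hmem k hk
    have hst₀ : s ≤ t₀ := hok.1
    have hok' : OKl (t₀ + l₀.1) e ps := hok.2
    have hF' : ∀ k' ∈ applyP F (t₀, l₀), k' < t₀ + l₀.1 := by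
      intro k' hk'
      simp only [applyP, Finset.mem_union, Finset.mem_image] at hk'
      rcases hk' with h | ⟨f, hf, rfl⟩
      · have := hF _ h; omega
      · have := hrange (t₀, l₀) (List.mem_cons_self) f hf
        simp only at this ⊢
        omega
    rcases List.mem_cons.1 hmem with heq | hmem'
    · -- head paste
      have ht : t = t₀ ∧ l = l₀ := by
        constructor
        · exact congrArg Prod.fst heq
        · exact congrArg Prod.snd heq
      obtain ⟨rfl, rfl⟩ := ht
      rw [applyPs_cons]
      rw [applyPs_low ps _ (t + l.1) e _ hok' (by omega)]
      simp only [applyP, Finset.mem_union, Finset.mem_image]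
      constructor
      · rintro (h | ⟨f, hf, he⟩)
        · have := hF _ h; omega
        · have : f = k := by omega
          subst this; exact hf
      · intro h; exact Or.inr ⟨k, h, by omega⟩
    · -- in tail
      rw [applyPs_cons]
      exact ih (applyP F (t₀, l₀)) (t₀ + l₀.1) e hok'
        (fun p hp => hrange p (List.mem_cons_of_mem _ hp)) hF' t l hmem' k hk

/-- the state of the construction. -/
structure St where
  E : ℕ
  F : Finset ℕ
  lvs : List Lv

end Core2

/-- a pack of data for the construction. -/
structure Pack where
  P : Set ℕ
  V : Finset ℕ → Set ℕ
  NN : Finset ℕ → ℕ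
  hV1 : ∀ F m, ∃ k, k ≤ NN F ∧ m + k ∈ V F
  hV2 : ∀ F : Finset ℕ, ↑F ⊆ P → ∀ t ∈ V F, ∀ f ∈ F, t + f ∈ P
  a₀ : ℕ
  ha₀ : a₀ ∈ P

namespace Pack

variable (pk : Pack)

noncomputable def fill (fuel s e : ℕ) (lvs : List Lv) : List (ℕ × Lv) :=
  fillAux pk.V pk.NN pk.hV1 fuel s e lvs

noncomputable def tN (E : ℕ) (F : Finset ℕ) : ℕ := pick pk.V pk.NN pk.hV1 F E

/-- pastes of one round. -/
noncomputable def rps (st : St) : List (ℕ × Lv) :=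
  pk.fill (pk.tN st.E st.F - st.E) st.E (pk.tN st.E st.F) st.lvs ++ [(pk.tN st.E st.F, (st.E, st.F))]

noncomputable def step (st : St) : St :=
  ⟨pk.tN st.E st.F + st.E, applyPs st.F (pk.rps st), st.lvs ++ [(st.E, st.F)]⟩

noncomputable def sq (r : ℕ) : St := (pk.step)^[r] ⟨pk.a₀ + 1, {pk.a₀}, []⟩

noncomputable def EE (r : ℕ) : ℕ := (pk.sq r).E
noncomputable def FF (r : ℕ) : Finset ℕ := (pk.sq r).F
noncomputable def LL (r : ℕ) : List Lv := (pk.sq r).lvs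
noncomputable def TT (r : ℕ) : ℕ := pk.tN (pk.EE r) (pk.FF r)
noncomputable def PS (r : ℕ) : List (ℕ × Lv) := pk.rps (pk.sq r)

lemma sq_succ (r : ℕ) : pk.sq (r+1) = pk.step (pk.sq r) :=
  Function.iterate_succ_apply' _ _ _

lemma E_succ (r : ℕ) : pk.EE (r+1) = pk.TT r + pk.EE r := by
  simp only [EE, TT, FF, sq_succ, step]

lemma F_succ (r : ℕ) : pk.FF (r+1) = applyPs (pk.FF r) (pk.PS r) := by
  simp only [FF, EE, PS, sq_succ, step]

lemma lvs_succ (r : ℕ) : pk.LL (r+1) = pk.LL r ++ [(pk.EE r, pk.FF r)] := by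
  simp only [LL, EE, FF, sq_succ, step]

@[simp] lemma E_zero : pk.EE 0 = pk.a₀ + 1 := rfl
@[simp] lemma F_zero : pk.FF 0 = {pk.a₀} := rfl
@[simp] lemma lvs_zero : pk.LL 0 = [] := rfl

lemma TT_ge (r : ℕ) : pk.EE r ≤ pk.TT r := pick_ge _ _ _ _ _
lemma TT_le (r : ℕ) : pk.TT r ≤ pk.EE r + pk.NN (pk.FF r) := pick_le _ _ _ _ _
lemma TT_mem (r : ℕ) : pk.TT r ∈ pk.V (pk.FF r) := pick_mem _ _ _ _ _

lemma PS_def (r : ℕ) : pk.PS r =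
    pk.fill (pk.TT r - pk.EE r) (pk.EE r) (pk.TT r) (pk.LL r) ++ [(pk.TT r, (pk.EE r, pk.FF r))] :=
  rfl

lemma PS_ok (r : ℕ) : OKl (pk.EE r) (pk.EE (r+1)) (pk.PS r) := by
  rw [PS_def]
  refine okl_append _ _ (pk.EE r) (pk.TT r) (pk.EE (r+1)) ?_ ?_
  · exact fill_ok _ _ _ _ _ _ _ (le_refl _) (pk.TT_ge r)
  · exact ⟨le_refl _, le_of_eq (pk.E_succ r).symm⟩

lemma E_pos (r : ℕ) : 1 ≤ pk.EE r := by
  induction r with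
  | zero => simp
  | succ r ih => rw [E_succ]; omega

lemma E_lt_succ (r : ℕ) : pk.EE r < pk.EE (r+1) := by
  have h1 := pk.TT_ge r
  have h2 := pk.E_pos r
  rw [E_succ]; omega

lemma E_mono {r r' : ℕ} (h : r ≤ r') : pk.EE r ≤ pk.EE r' := by
  induction r' with
  | zero => simp at h; subst h; exact le_refl _
  | succ r' ih =>
    rcases Nat.lt_or_ge r (r'+1) with h' | h'
    · exact le_trans (ih (by omega)) (le_of_lt (pk.E_lt_succ r'))
    · have : r = r' + 1 := by omega
      subst this; exact le_refl _

lemma E_strict {r r' : ℕ} (h : r < r') : pk.EE r < pk.EE r' :=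
  lt_of_lt_of_le (pk.E_lt_succ r) (pk.E_mono h)

lemma E_ge (r : ℕ) : r + 1 ≤ pk.EE r := by
  induction r with
  | zero => simp
  | succ r ih => have := pk.E_lt_succ r; omega

lemma lvs_spec (r : ℕ) : ∀ l ∈ pk.LL r, ∃ j, j < r ∧ l = (pk.EE j, pk.FF j) := by
  induction r with
  | zero => simp
  | succ r ih =>
    intro l hl
    rw [lvs_succ] at hl
    rcases List.mem_append.1 hl with h | h
    · obtain ⟨j, hj, he⟩ := ih l h
      exact ⟨j, by omega, he⟩
    · simp only [List.mem_singleton] at h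
      exact ⟨r, by omega, h⟩

lemma lvs_spec' {j r : ℕ} (h : j < r) : (pk.EE j, pk.FF j) ∈ pk.LL r := by
  induction r with
  | zero => omega
  | succ r ih =>
    rw [lvs_succ]
    rcases Nat.lt_or_ge j r with h' | h'
    · exact List.mem_append.2 (Or.inl (ih h'))
    · have : j = r := by omega
      subst this
      exact List.mem_append.2 (Or.inr (List.mem_singleton.2 rfl))

lemma PS_mem (r : ℕ) : ∀ p ∈ pk.PS r,
    (p.2 ∈ pk.LL r ∨ p.2 = (pk.EE r, pk.FF r)) ∧ p.1 ∈ pk.V p.2.2 ∧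
      pk.EE r ≤ p.1 ∧ p.1 + p.2.1 ≤ pk.EE (r+1) := by
  intro p hp
  rw [PS_def] at hp
  rcases List.mem_append.1 hp with h | h
  · obtain ⟨a1, a2, a3, a4, _⟩ := fill_mem pk.V pk.NN pk.hV1 _ _ _ _ (le_refl _) p h
    refine ⟨Or.inl a1, a2, a3, ?_⟩
    calc p.1 + p.2.1 ≤ pk.TT r := a4
    _ ≤ pk.EE (r+1) := by rw [E_succ]; have := pk.E_pos r; omega
  · simp only [List.mem_singleton] at h
    subst h
    exact ⟨Or.inr rfl, pk.TT_mem r, pk.TT_ge r, le_of_eq (pk.E_succ r).symm⟩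

lemma F_lt_aux : ∀ (r : ℕ), ∀ j ≤ r, ∀ k ∈ pk.FF j, k < pk.EE j := by
  intro r
  induction r with
  | zero =>
    intro j hj k hk
    interval_cases j
    simp only [F_zero, Finset.mem_singleton] at hk
    subst hk
    rw [E_zero]; omega
  | succ r ih =>
    intro j hj k hk
    rcases Nat.lt_or_ge j (r+1) with h' | h'
    · exact ih j (by omega) k hk
    · have hj' : j = r + 1 := by omega
      subst hj'
      rw [F_succ] at hk
      rw [applyPs_mem] at hk
      rcases hk with h | ⟨p, hp, f, hf, rfl⟩
      · exact lt_of_lt_of_le (ih r (le_refl _) k h) (le_of_lt (pk.E_lt_succ r))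

      · obtain ⟨hlv, _, hge, hle⟩ := pk.PS_mem r p hp
        have hflt : f < p.2.1 := by
          rcases hlv with h | h
          · obtain ⟨j', hj', he⟩ := pk.lvs_spec r p.2 h
            have := ih j' (by omega) f (by rw [he] at hf; exact hf)
            rw [he]
            exact this
          · have := ih r (le_refl _) f (by rw [h] at hf; exact hf)
            rw [h]
            exact this
        omega

lemma F_lt (r : ℕ) : ∀ k ∈ pk.FF r, k < pk.EE r := pk.F_lt_aux r r (le_refl r)

lemma lvs_range (r : ℕ) : ∀ p ∈ pk.PS r, ∀ f ∈ p.2.2, f < p.2.1 := by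
  intro p hp f hf
  obtain ⟨hlv, _, _, _⟩ := pk.PS_mem r p hp
  rcases hlv with h | h
  · obtain ⟨j, hj, he⟩ := pk.lvs_spec r p.2 h
    rw [he] at hf ⊢
    exact pk.F_lt j f hf
  · rw [h] at hf ⊢
    exact pk.F_lt r f hf

lemma F_sub_P_aux : ∀ (r : ℕ), ∀ j ≤ r, ∀ k ∈ pk.FF j, k ∈ pk.P := by
  intro r
  induction r with
  | zero =>
    intro j hj k hk
    interval_cases j
    simp only [F_zero, Finset.mem_singleton] at hk
    subst hk
    exact pk.ha₀
  | succ r ih =>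
    intro j hj k hk
    rcases Nat.lt_or_ge j (r+1) with h' | h'
    · exact ih j (by omega) k hk
    · have hj' : j = r + 1 := by omega
      subst hj'
      rw [F_succ, applyPs_mem] at hk
      rcases hk with h | ⟨p, hp, f, hf, rfl⟩
      · exact ih r (le_refl _) k h
      · obtain ⟨hlv, hVmem, _, _⟩ := pk.PS_mem r p hp
        have hFP : ↑p.2.2 ⊆ pk.P := by
          rcases hlv with h | h
          · obtain ⟨j', hj', he⟩ := pk.lvs_spec r p.2 h
            intro g hg
            rw [he] at hg
            exact ih j' (by omega) g hg
          · intro g hg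
            rw [h] at hg
            exact ih r (le_refl _) g hg
        have h2 := pk.hV2 p.2.2 hFP p.1 hVmem f hf
        rwa [Nat.add_comm]

lemma F_sub_P (r : ℕ) : ∀ k ∈ pk.FF r, k ∈ pk.P := pk.F_sub_P_aux r r (le_refl r)

lemma F_mono_succ (r : ℕ) : pk.FF r ⊆ pk.FF (r+1) := by
  rw [F_succ]; exact applyPs_sub _ _

lemma F_mono {r r' : ℕ} (h : r ≤ r') : pk.FF r ⊆ pk.FF r' := by
  induction r' with
  | zero => simp at h; subst h; exact Finset.Subset.refl _
  | succ r' ih =>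
    rcases Nat.lt_or_ge r (r'+1) with h' | h'
    · exact Finset.Subset.trans (ih (by omega)) (pk.F_mono_succ r')
    · have : r = r' + 1 := by omega
      subst this; exact Finset.Subset.refl _

lemma F_stab {r : ℕ} {k : ℕ} (hk : k < pk.EE r) : k ∈ pk.FF (r+1) ↔ k ∈ pk.FF r := by
  rw [F_succ]
  exact applyPs_low _ _ _ _ _ (pk.PS_ok r) hk

lemma F_stab' {r r' : ℕ} (h : r ≤ r') {k : ℕ} (hk : k < pk.EE r) :
    (k ∈ pk.FF r' ↔ k ∈ pk.FF r) := by
  induction r' with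
  | zero => simp at h; subst h; rfl
  | succ r' ih =>
    rcases Nat.lt_or_ge r (r'+1) with h' | h'
    · have h'' : r ≤ r' := by omega
      rw [← ih h'']
      exact pk.F_stab (lt_of_lt_of_le hk (pk.E_mono h''))
    · have : r = r' + 1 := by omega
      subst this; rfl

noncomputable def xx (k : ℕ) : Bool :=
  @ite _ (∃ r, k ∈ pk.FF r) (Classical.propDecidable _) true false

lemma xx_true_iff (k : ℕ) : pk.xx k = true ↔ ∃ r, k ∈ pk.FF r := by
  unfold xx
  split
  · simp only [true_iff]; assumption
  · simp only [Bool.false_eq_true, false_iff]; assumption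

lemma xx_stab {r k : ℕ} (hk : k < pk.EE r) : pk.xx k = true ↔ k ∈ pk.FF r := by
  rw [xx_true_iff]
  constructor
  · rintro ⟨r', hr'⟩
    rcases le_or_gt r' r with h | h
    · exact pk.F_mono h hr'
    · exact (pk.F_stab' (le_of_lt h) hk).1 hr'
  · intro h; exact ⟨r, h⟩

/-- `Cp t ℓ`: the pattern `[0,ℓ)` of `xx` is copied at position `t`. -/
def Cp (t ℓ : ℕ) : Prop := ∀ k, k < ℓ → pk.xx (t + k) = pk.xx k

lemma cp_zero (ℓ : ℕ) : pk.Cp 0 ℓ := by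
  intro k _; rw [Nat.zero_add]

lemma cp_restrict {t ℓ ℓ' : ℕ} (h : pk.Cp t ℓ) (h' : ℓ' ≤ ℓ) : pk.Cp t ℓ' :=
  fun k hk => h k (lt_of_lt_of_le hk h')

lemma cp_trans {t ℓ s ℓ' : ℕ} (h : pk.Cp t ℓ) (h2 : pk.Cp s ℓ') (h3 : s + ℓ' ≤ ℓ) :
    pk.Cp (t + s) ℓ' := by
  intro k hk
  have e1 : t + s + k = t + (s + k) := by omega
  rw [e1, h (s + k) (by omega), h2 k hk]

lemma bool_eq_of_iff {a b : Bool} (h : a = true ↔ b = true) : a = b := by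
  cases a <;> cases b <;> simp_all

lemma paste_cp (r : ℕ) : ∀ p ∈ pk.PS r, pk.Cp p.1 p.2.1 := by
  intro p hp k hk
  obtain ⟨hlv, _, hge, hle⟩ := pk.PS_mem r p hp
  -- p.2 = (EE j, FF j) for some j ≤ r
  obtain ⟨j, hj, hpe⟩ : ∃ j, j ≤ r ∧ p.2 = (pk.EE j, pk.FF j) := by
    rcases hlv with h | h
    · obtain ⟨j, hj, he⟩ := pk.lvs_spec r p.2 h
      exact ⟨j, by omega, he⟩
    · exact ⟨r, le_refl _, h⟩
  have hlen : p.2.1 = pk.EE j := by rw [hpe]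
  have hset : p.2.2 = pk.FF j := by rw [hpe]
  apply bool_eq_of_iff
  have h1 : pk.xx (p.1 + k) = true ↔ p.1 + k ∈ pk.FF (r+1) := by
    apply pk.xx_stab
    omega
  have h2 : p.1 + k ∈ pk.FF (r+1) ↔ k ∈ p.2.2 := by
    rw [F_succ]
    exact applyPs_window (pk.PS r) (pk.FF r) (pk.EE r) (pk.EE (r+1)) (pk.PS_ok r)
      (pk.lvs_range r) (pk.F_lt r) p.1 p.2 (by rcases p with ⟨t, l⟩; exact hp) k hk
  have h3 : pk.xx k = true ↔ k ∈ pk.FF j := pk.xx_stab (by omega)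
  rw [h1, h2, h3, hset]

lemma main_cp (r : ℕ) : pk.Cp (pk.TT r) (pk.EE r) := by
  have h : (pk.TT r, (pk.EE r, pk.FF r)) ∈ pk.PS r := by
    rw [PS_def]
    exact List.mem_append.2 (Or.inr (List.mem_singleton.2 rfl))
  exact pk.paste_cp r _ h

lemma flush : ∀ (r j : ℕ), j ≤ r → pk.Cp (pk.EE r - pk.EE j) (pk.EE j) := by
  intro r
  induction r with
  | zero =>
    intro j hj
    interval_cases j
    simpa using pk.cp_zero _
  | succ r ih =>
    intro j hj
    rcases Nat.lt_or_ge j (r+1) with h' | h'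
    · have hjr : j ≤ r := by omega
      have hEE : pk.EE j ≤ pk.EE r := pk.E_mono hjr
      have heq : pk.EE (r+1) - pk.EE j = pk.TT r + (pk.EE r - pk.EE j) := by
        rw [E_succ]; omega
      rw [heq]
      exact pk.cp_trans (pk.main_cp r) (ih j hjr) (by omega)
    · have : j = r + 1 := by omega
      subst this
      simpa using pk.cp_zero _

lemma tN_ge (E : ℕ) (F : Finset ℕ) : E ≤ pk.tN E F := pick_ge _ _ _ _ _
lemma tN_le (E : ℕ) (F : Finset ℕ) : pk.tN E F ≤ E + pk.NN F := pick_le _ _ _ _ _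
lemma tN_mem (E : ℕ) (F : Finset ℕ) : pk.tN E F ∈ pk.V F := pick_mem _ _ _ _ _

lemma fill_succ_some {fuel s e : ℕ} {lvs : List Lv} {l : Lv}
    (heq : pickL pk.NN lvs (e - s) = some l) :
    pk.fill (fuel+1) s e lvs =
      pk.fill fuel s (pk.tN s l.2) lvs ++ (pk.tN s l.2, l) :: pk.fill fuel (pk.tN s l.2 + l.1) e lvs := by
  show fillAux pk.V pk.NN pk.hV1 (fuel+1) s e lvs = _
  rw [fillAux, heq]
  rfl

lemma fill_succ_none {fuel s e : ℕ} {lvs : List Lv}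
    (heq : pickL pk.NN lvs (e - s) = none) :
    pk.fill (fuel+1) s e lvs = [] := by
  show fillAux pk.V pk.NN pk.hV1 (fuel+1) s e lvs = _
  rw [fillAux, heq]

/-- an occurrence of the length-`E j` prefix near the start of a filled region. -/
lemma fsl (j : ℕ) : ∀ (fuel s e : ℕ) (lvs : List Lv), e - s ≤ fuel →
    (pk.EE j, pk.FF j) ∈ lvs → pk.EE j + pk.NN (pk.FF j) + 1 ≤ e - s →
    ∃ p ∈ pk.fill fuel s e lvs,
      s ≤ p.1 ∧ p.1 ≤ s + pk.EE j + pk.NN (pk.FF j) ∧ pk.EE j ≤ p.2.1 ∧ p.1 + p.2.1 ≤ e := by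
  intro fuel
  induction fuel with
  | zero =>
    intro s e lvs hfe _ hK
    omega
  | succ fuel ih =>
    intro s e lvs hfe hlv hK
    have hfit : fits pk.NN (e - s) (pk.EE j, pk.FF j) := ⟨pk.E_pos j, hK⟩
    obtain ⟨l, heq, hlj⟩ := pickL_max pk.NN lvs (e - s) _ hlv hfit
    obtain ⟨hlmem, hl1, hl2⟩ := pickL_mem pk.NN lvs (e - s) l heq
    set t := pk.tN s l.2 with htdef
    have hts : s ≤ t := pk.tN_ge s l.2
    have htle : t ≤ s + pk.NN l.2 := pk.tN_le s l.2
    have htple : t + l.1 ≤ e := by omega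
    rw [pk.fill_succ_some heq]
    rcases Nat.lt_or_ge (t - s) (pk.EE j + pk.NN (pk.FF j) + 1) with hc | hc
    · -- the paste (t, l) itself is close enough
      refine ⟨(t, l), ?_, hts, by omega, hlj, htple⟩
      exact List.mem_append.2 (Or.inr (List.mem_cons_self))
    · -- recurse on the left part
      have hfuel1 : t - s ≤ fuel := by omega
      obtain ⟨p, hp, a1, a2, a3, a4⟩ := ih s t lvs hfuel1 hlv (by omega)
      exact ⟨p, List.mem_append.2 (Or.inl hp), a1, a2, a3, by omega⟩

/-- the global fill spec: occurrences of the length-`EE j` prefix are dense in filled regions. -/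
lemma fsg (j : ℕ) : ∀ (fuel s e : ℕ) (lvs : List Lv), e - s ≤ fuel →
    (pk.EE j, pk.FF j) ∈ lvs →
    (∀ l ∈ lvs, ∀ u, u + 4 * (pk.EE j + pk.NN (pk.FF j) + 1) ≤ l.1 →
       ∃ s', u ≤ s' ∧ s' ≤ u + 4 * (pk.EE j + pk.NN (pk.FF j) + 1) ∧
         s' + pk.EE j ≤ l.1 ∧ pk.Cp s' (pk.EE j)) →
    (∀ l ∈ lvs, pk.EE j ≤ l.1 → pk.Cp (l.1 - pk.EE j) (pk.EE j)) →
    (∀ p ∈ pk.fill fuel s e lvs, pk.Cp p.1 p.2.1) →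
    ∀ u, s ≤ u → u + 4 * (pk.EE j + pk.NN (pk.FF j) + 1) ≤ e →
    ∃ s', u ≤ s' ∧ s' ≤ u + 4 * (pk.EE j + pk.NN (pk.FF j) + 1) ∧
      s' + pk.EE j ≤ e ∧ pk.Cp s' (pk.EE j) := by
  have hE1 : 1 ≤ pk.EE j := pk.E_pos j
  intro fuel
  induction fuel with
  | zero =>
    intro s e lvs hfe _ _ _ _ u hu hue
    omega
  | succ fuel ih =>
    intro s e lvs hfe hlv hreg hflush hcp u hu hue
    have hKes : pk.EE j + pk.NN (pk.FF j) + 1 ≤ e - s := by omega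
    have hfit : fits pk.NN (e - s) (pk.EE j, pk.FF j) := ⟨hE1, hKes⟩
    obtain ⟨l, heq, hlj⟩ := pickL_max pk.NN lvs (e - s) _ hlv hfit
    obtain ⟨hlmem, hl1, hl2⟩ := pickL_mem pk.NN lvs (e - s) l heq
    rw [pk.fill_succ_some heq] at hcp
    set t := pk.tN s l.2 with htdef
    have hts : s ≤ t := pk.tN_ge s l.2
    have htle : t ≤ s + pk.NN l.2 := pk.tN_le s l.2
    have htple : t + l.1 ≤ e := by omega
    have hfuel1 : t - s ≤ fuel := by omega
    have hfuel2 : e - (t + l.1) ≤ fuel := by omega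
    have hcpL : ∀ p ∈ pk.fill fuel s t lvs, pk.Cp p.1 p.2.1 :=
      fun p hp => hcp p (List.mem_append.2 (Or.inl hp))
    have hcpM : pk.Cp t l.1 :=
      hcp (t, l) (List.mem_append.2 (Or.inr (List.mem_cons_self)))
    have hcpR : ∀ p ∈ pk.fill fuel (t + l.1) e lvs, pk.Cp p.1 p.2.1 :=
      fun p hp => hcp p (List.mem_append.2 (Or.inr (List.mem_cons_of_mem _ hp)))
    rcases Nat.lt_or_ge t (u + 4 * (pk.EE j + pk.NN (pk.FF j) + 1)) with hA | hA
    swap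
    · -- case A : window entirely left of t
      obtain ⟨s', a1, a2, a3, a4⟩ := ih s t lvs hfuel1 hlv hreg hflush hcpL u hu (by omega)
      exact ⟨s', a1, a2, by omega, a4⟩
    rcases Nat.lt_or_ge u (t + l.1) with hB | hB
    swap
    · -- case B : window entirely right of the copy
      exact ih (t + l.1) e lvs hfuel2 hlv hreg hflush hcpR u hB hue
    rcases le_or_gt u t with hC | hC
    · -- case C1 : t is inside the window
      exact ⟨t, hC, by omega, by omega, pk.cp_restrict hcpM hlj⟩
    · -- t < u < t + l.1
      rcases le_or_gt (u + 4 * (pk.EE j + pk.NN (pk.FF j) + 1)) (t + l.1) with hD | hD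
      · -- case C2a : window inside the copy
        obtain ⟨s'', b1, b2, b3, b4⟩ := hreg l hlmem (u - t) (by omega)
        refine ⟨t + s'', by omega, by omega, by omega, ?_⟩
        exact pk.cp_trans hcpM b4 b3
      · rcases le_or_gt (u + pk.EE j) (t + l.1) with hE | hE
        · -- case C2b1 : flush occurrence at the end of the copy
          refine ⟨t + (l.1 - pk.EE j), by omega, by omega, by omega, ?_⟩
          exact pk.cp_trans hcpM (hflush l hlmem hlj) (by omega)
        · -- case C2b2 : use the start of the right region
          obtain ⟨p, hp, c1, c2, c3, c4⟩ := pk.fsl j fuel (t + l.1) e lvs hfuel2 hlv (by omega)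
          refine ⟨p.1, by omega, by omega, by omega, ?_⟩
          exact pk.cp_restrict (hcpR p hp) c3

/-- the density of occurrences of the length-`EE j` prefix, by strong induction on rounds. -/
lemma reg (j : ℕ) : ∀ (r : ℕ), ∀ u, u + 4 * (pk.EE j + pk.NN (pk.FF j) + 1) ≤ pk.EE r →
    ∃ s', u ≤ s' ∧ s' ≤ u + 4 * (pk.EE j + pk.NN (pk.FF j) + 1) ∧
      s' + pk.EE j ≤ pk.EE r ∧ pk.Cp s' (pk.EE j) := by
  have hE1 : 1 ≤ pk.EE j := pk.E_pos j
  intro r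
  induction r using Nat.strong_induction_on with
  | _ r ih =>
    rcases r with _ | r
    · -- r = 0 : vacuous
      intro u hu
      have h0 : pk.EE 0 ≤ pk.EE j := pk.E_mono (Nat.zero_le j)
      omega
    · intro u hu
      have hEsucc : pk.EE (r+1) = pk.TT r + pk.EE r := pk.E_succ r
      have hTge : pk.EE r ≤ pk.TT r := pk.TT_ge r
      rcases le_or_gt (u + 4 * (pk.EE j + pk.NN (pk.FF j) + 1)) (pk.EE r) with hi | hi
      · -- (i) window inside previous stage
        obtain ⟨s', a1, a2, a3, a4⟩ := ih r (by omega) u hi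
        exact ⟨s', a1, a2, by omega, a4⟩
      rcases le_or_gt (pk.TT r) u with hii | hii
      · -- (ii) window inside the main copy
        have hur : (u - pk.TT r) + 4 * (pk.EE j + pk.NN (pk.FF j) + 1) ≤ pk.EE r := by omega
        obtain ⟨s'', b1, b2, b3, b4⟩ := ih r (by omega) (u - pk.TT r) hur
        refine ⟨pk.TT r + s'', by omega, by omega, by omega, ?_⟩
        exact pk.cp_trans (pk.main_cp r) b4 b3
      · -- (iii) u < TT r and EE r < u + 4K
        have hjr : j < r := by
          by_contra hcon
          push_neg at hcon
          rcases lt_or_eq_of_le hcon with h' | h'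
          · -- r < j
            have : pk.EE (r+1) ≤ pk.EE j := pk.E_mono (by omega)
            omega
          · -- r = j
            subst h'
            have := pk.TT_le r
            omega
        have hlv : (pk.EE j, pk.FF j) ∈ pk.LL (r+1-1) := pk.lvs_spec' hjr
        simp only [Nat.add_sub_cancel] at hlv
        have hreg : ∀ l ∈ pk.LL r, ∀ u', u' + 4 * (pk.EE j + pk.NN (pk.FF j) + 1) ≤ l.1 →
            ∃ s', u' ≤ s' ∧ s' ≤ u' + 4 * (pk.EE j + pk.NN (pk.FF j) + 1) ∧
              s' + pk.EE j ≤ l.1 ∧ pk.Cp s' (pk.EE j) := by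
          intro l hl u' hu'
          obtain ⟨j', hj', he⟩ := pk.lvs_spec r l hl
          rw [he] at hu' ⊢
          exact ih j' (by omega) u' hu'
        have hflush : ∀ l ∈ pk.LL r, pk.EE j ≤ l.1 → pk.Cp (l.1 - pk.EE j) (pk.EE j) := by
          intro l hl hle
          obtain ⟨j', hj', he⟩ := pk.lvs_spec r l hl
          rw [he] at hle ⊢
          have hjj' : j ≤ j' := by
            by_contra hcon
            push_neg at hcon
            have := pk.E_strict hcon
            simp only at hle
            omega
          exact pk.flush j' j hjj'
        have hcp : ∀ p ∈ pk.fill (pk.TT r - pk.EE r) (pk.EE r) (pk.TT r) (pk.LL r),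
            pk.Cp p.1 p.2.1 := by
          intro p hp
          apply pk.paste_cp r
          rw [PS_def]
          exact List.mem_append.2 (Or.inl hp)
        rcases le_or_gt (pk.TT r) (u + 4 * (pk.EE j + pk.NN (pk.FF j) + 1)) with hα | hα
        · -- (α) the main copy anchor is in the window
          have hlje : pk.EE j ≤ pk.EE r := le_of_lt (pk.E_strict hjr)
          exact ⟨pk.TT r, by omega, by omega, by omega,
            pk.cp_restrict (pk.main_cp r) hlje⟩
        · rcases le_or_gt (pk.EE r) u with hβ | hβ
          · -- (β1) window inside the hole
            obtain ⟨s', c1, c2, c3, c4⟩ := pk.fsg j (pk.TT r - pk.EE r) (pk.EE r) (pk.TT r)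
              (pk.LL r) (le_refl _) hlv hreg hflush hcp u hβ (by omega)
            exact ⟨s', c1, c2, by omega, c4⟩
          · rcases le_or_gt (u + pk.EE j) (pk.EE r) with hγ | hγ
            · -- (β2a) flush occurrence at the end of stage r
              have hlje : pk.EE j ≤ pk.EE r := le_of_lt (pk.E_strict hjr)
              refine ⟨pk.EE r - pk.EE j, by omega, by omega, by omega, ?_⟩
              exact pk.flush r j (by omega)
            · -- (β2b) near-boundary: occurrence near the start of the hole
              obtain ⟨p, hp, d1, d2, d3, d4⟩ := pk.fsl j (pk.TT r - pk.EE r) (pk.EE r)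
                (pk.TT r) (pk.LL r) (le_refl _) hlv (by omega)
              refine ⟨p.1, by omega, by omega, by omega, ?_⟩
              apply pk.cp_restrict _ d3
              apply hcp p hp

lemma xx_sub_P {k : ℕ} (h : pk.xx k = true) : k ∈ pk.P := by
  rw [xx_true_iff] at h
  obtain ⟨r, hr⟩ := h
  exact pk.F_sub_P r k hr

lemma xx_a₀ : pk.xx pk.a₀ = true := by
  rw [pk.xx_stab (r := 0) (by rw [E_zero]; omega)]
  simp

theorem xx_recurrent : ∀ L, ∃ G, ∀ m, ∃ s, s ≤ G ∧ ∀ k, k ≤ L → pk.xx (m + s + k) = pk.xx k := by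
  intro L
  refine ⟨4 * (pk.EE L + pk.NN (pk.FF L) + 1), fun m => ?_⟩
  have hEL : L + 1 ≤ pk.EE L := pk.E_ge L
  set K4 := 4 * (pk.EE L + pk.NN (pk.FF L) + 1) with hK4
  have hEr : m + K4 ≤ pk.EE (m + K4) := by
    have := pk.E_ge (m + K4)
    omega
  obtain ⟨s', a1, a2, _, a4⟩ := pk.reg L (m + K4) m hEr
  refine ⟨s' - m, by omega, fun k hk => ?_⟩
  have hms : m + (s' - m) = s' := by omega
  rw [hms]
  exact a4 k (by omega)

end Pack

end DSCore


namespace DSTop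

/-- the one-sided shift on `ℕ → Bool`. -/
def sh : (ℕ → Bool) → (ℕ → Bool) := fun z k => z (k+1)

lemma sh_cont : Continuous sh := continuous_pi (fun _ => continuous_apply _)

lemma sh_iter (m : ℕ) (z : ℕ → Bool) (k : ℕ) : (sh^[m] z) k = z (k + m) := by
  induction m generalizing z k with
  | zero => rfl
  | succ m ih =>
    rw [Function.iterate_succ_apply, ih]
    show z (k + m + 1) = z (k + (m+1))
    congr 1

lemma coord_open (k : ℕ) (b : Bool) : IsOpen {w : ℕ → Bool | w k = b} := by
  have h : IsOpen ((fun w : ℕ → Bool => w k) ⁻¹' {b}) :=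
    (isOpen_discrete _).preimage (continuous_apply k)
  exact h

lemma mem_closure_iff_agree (T : Set (ℕ → Bool)) (z : ℕ → Bool) :
    z ∈ closure T ↔ ∀ L, ∃ w ∈ T, ∀ k ≤ L, w k = z k := by
  constructor
  · intro hz L
    have hopen : IsOpen (⋂ k ∈ Finset.range (L+1), {w : ℕ → Bool | w k = z k}) :=
      isOpen_biInter_finset (fun k _ => coord_open k (z k))
    obtain ⟨w, hw1, hw2⟩ := mem_closure_iff.1 hz _ hopen
      (by simp only [Set.mem_iInter]; intro k _; rfl)
    refine ⟨w, hw2, fun k hk => ?_⟩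
    simp only [Set.mem_iInter, Set.mem_setOf_eq] at hw1
    exact hw1 k (Finset.mem_range.2 (by omega))
  · intro h
    rw [mem_closure_iff]
    intro o ho hzo
    obtain ⟨I, u, hIu, hsub⟩ := isOpen_pi_iff.1 ho z hzo
    obtain ⟨L, hL⟩ := Finset.exists_le I
    obtain ⟨w, hwT, hw⟩ := h L
    refine ⟨w, hsub ?_, hwT⟩
    rw [Set.mem_pi]
    intro a ha
    rw [hw a (hL a ha)]
    exact (hIu a ha).2

section OrbitClosure

variable (x : ℕ → Bool)

def Sset : Set (ℕ → Bool) := closure (Set.range fun t : ℕ => sh^[t] x)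

lemma x_mem_Sset : x ∈ Sset x :=
  subset_closure ⟨0, rfl⟩

lemma iter_mem_Sset (t : ℕ) : sh^[t] x ∈ Sset x :=
  subset_closure ⟨t, rfl⟩

lemma Sset_closed : IsClosed (Sset x) := isClosed_closure

lemma Sset_inv : ∀ z ∈ Sset x, sh z ∈ Sset x := by
  intro z hz
  have h1 : sh '' (Set.range fun t : ℕ => sh^[t] x) ⊆ Set.range fun t : ℕ => sh^[t] x := by
    rintro _ ⟨w, ⟨t, rfl⟩, rfl⟩
    refine ⟨t + 1, ?_⟩
    show sh^[t+1] x = sh (sh^[t] x)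
    rw [Function.iterate_succ_apply']
  have h2 : sh z ∈ sh '' closure (Set.range fun t : ℕ => sh^[t] x) := ⟨z, hz, rfl⟩
  have h3 := image_closure_subset_closure_image (s := Set.range fun t : ℕ => sh^[t] x) sh_cont h2
  exact closure_mono h1 h3

variable (hrec : ∀ L, ∃ G, ∀ m, ∃ s, s ≤ G ∧ ∀ k, k ≤ L → x (m + s + k) = x k)

lemma windows_of_mem {z : ℕ → Bool} (hz : z ∈ Sset x) (L : ℕ) :
    ∃ t : ℕ, ∀ k ≤ L, x (k + t) = z k := by
  obtain ⟨w, ⟨t, rfl⟩, hw⟩ := (mem_closure_iff_agree _ z).1 hz L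
  exact ⟨t, fun k hk => by rw [← sh_iter t x k]; exact hw k hk⟩

include hrec in
lemma return_close {z : ℕ → Bool} (hz : z ∈ Sset x) (L : ℕ) :
    ∃ j : ℕ, 1 ≤ j ∧ ∀ k ≤ L, z (k + j) = x k := by
  obtain ⟨G, hG⟩ := hrec L
  obtain ⟨t, ht⟩ := windows_of_mem x hz (L + G + 1)
  obtain ⟨s, hs, hocc⟩ := hG (t + 1)
  refine ⟨1 + s, by omega, fun k hk => ?_⟩
  have h1 : z (k + (1 + s)) = x ((k + (1 + s)) + t) := (ht _ (by omega)).symm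
  rw [h1]
  have h2 : (k + (1 + s)) + t = (t + 1) + s + k := by omega
  rw [h2]
  exact hocc k hk

include hrec in
lemma x_mem_orbclosure {z : ℕ → Bool} (hz : z ∈ Sset x) :
    x ∈ closure (Set.range fun p : ℕ+ => sh^[(p : ℕ)] z) := by
  rw [mem_closure_iff_agree]
  intro L
  obtain ⟨j, hj1, hj⟩ := return_close x hrec hz L
  refine ⟨sh^[j] z, ⟨⟨j, hj1⟩, rfl⟩, fun k hk => ?_⟩
  rw [sh_iter]
  exact hj k hk

include hrec in
lemma iter_mem_orbclosure {z : ℕ → Bool} (hz : z ∈ Sset x) (m : ℕ) :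
    sh^[m] x ∈ closure (Set.range fun p : ℕ+ => sh^[(p : ℕ)] z) := by
  have h1 : sh^[m] '' (Set.range fun p : ℕ+ => sh^[(p : ℕ)] z)
      ⊆ Set.range fun p : ℕ+ => sh^[(p : ℕ)] z := by
    rintro _ ⟨w, ⟨p, rfl⟩, rfl⟩
    refine ⟨⟨m + (p : ℕ), by have := p.pos; omega⟩, ?_⟩
    show sh^[(m + (p:ℕ))] z = sh^[m] (sh^[(p:ℕ)] z)
    rw [Function.iterate_add_apply]
  have h2 : sh^[m] x ∈ sh^[m] '' closure (Set.range fun p : ℕ+ => sh^[(p : ℕ)] z) :=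
    ⟨x, x_mem_orbclosure x hrec hz, rfl⟩
  have h3 := image_closure_subset_closure_image (sh_cont.iterate m) h2
  exact closure_mono h1 h3

include hrec in
lemma Sset_minimal {z : ℕ → Bool} (hz : z ∈ Sset x) :
    Sset x ⊆ closure (Set.range fun p : ℕ+ => sh^[(p : ℕ)] z) := by
  have h1 : (Set.range fun t : ℕ => sh^[t] x)
      ⊆ closure (Set.range fun p : ℕ+ => sh^[(p : ℕ)] z) := by
    rintro _ ⟨t, rfl⟩
    exact iter_mem_orbclosure x hrec hz t
  calc Sset x ⊆ closure (closure (Set.range fun p : ℕ+ => sh^[(p : ℕ)] z)) := closure_mono h1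
  _ = _ := closure_closure

end OrbitClosure

end DSTop

-- basic lemmas
lemma syndetic_iff (A : Set ℕ+) :
    Syndetic A ↔ ∃ N : ℕ+, ∀ m : ℕ+, m ∈ A ∨ ∃ k : ℕ+, k ≤ N ∧ m + k ∈ A := by
  unfold Syndetic
  constructor
  · rintro ⟨N, hN⟩
    refine ⟨N, fun m => ?_⟩
    have : m ∈ A ∪ ⋃ k ∈ {k : ℕ+ | k ≤ N}, shiftN A k := hN ▸ Set.mem_univ m
    rcases this with h | h
    · exact Or.inl h
    · simp only [Set.mem_iUnion, Set.mem_setOf_eq] at h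
      obtain ⟨k, hk, hmk⟩ := h
      exact Or.inr ⟨k, hk, hmk⟩
  · rintro ⟨N, hN⟩
    refine ⟨N, Set.eq_univ_of_forall fun m => ?_⟩
    rcases hN m with h | ⟨k, hk, hmk⟩
    · exact Or.inl h
    · exact Or.inr (by simp only [Set.mem_iUnion, Set.mem_setOf_eq]; exact ⟨k, hk, hmk⟩)

lemma Syndetic.mono {A B : Set ℕ+} (h : Syndetic A) (hAB : A ⊆ B) : Syndetic B := by
  rw [syndetic_iff] at h ⊢
  obtain ⟨N, hN⟩ := h
  exact ⟨N, fun m => (hN m).imp (fun h => hAB h) (fun ⟨k, hk, hmk⟩ => ⟨k, hk, hAB hmk⟩)⟩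

lemma Syndetic.nonempty {A : Set ℕ+} (h : Syndetic A) : A.Nonempty := by
  rw [syndetic_iff] at h
  obtain ⟨N, hN⟩ := h
  rcases hN 1 with h1 | ⟨k, _, hk⟩
  exacts [⟨1, h1⟩, ⟨1 + k, hk⟩]

lemma syndetic_univ : Syndetic (Set.univ : Set ℕ+) := by
  rw [syndetic_iff]; exact ⟨1, fun m => Or.inl trivial⟩

lemma shiftN_shiftN (A : Set ℕ+) (a b : ℕ+) : shiftN (shiftN A a) b = shiftN A (b + a) := by
  ext m; simp only [shiftN, Set.mem_setOf_eq, add_assoc]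

lemma shiftN_mono {A B : Set ℕ+} (h : A ⊆ B) (n : ℕ+) : shiftN A n ⊆ shiftN B n :=
  fun _ hm => h hm

-- finite intersections in a filter family
lemma filter_biInter {F : Set (Set ℕ+)} (hF : IsFilterFamily F) (s : Finset ℕ+)
    (hs : s.Nonempty) (f : ℕ+ → Set ℕ+) (hf : ∀ i ∈ s, f i ∈ F) :
    (⋂ i ∈ s, f i) ∈ F := by
  induction hs using Finset.Nonempty.cons_induction with
  | singleton i => simpa using hf i (by simp)
  | cons i s his hs ih =>
      have : (⋂ j ∈ Finset.cons i s his, f j) = f i ∩ ⋂ j ∈ s, f j := by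
        simp [Finset.cons_eq_insert, Set.biInter_insert]
      rw [this]
      exact hF.2 (hf i (by simp)) (ih (fun j hj => hf j (by simp [hj])))

section Part1
variable {A : Set ℕ+} {n : ℕ+} {𝓕 : Set (Set ℕ+)}
variable (hFil : IsFilterFamily 𝓕) (hSyn : SyndeticFamily 𝓕) (hIde : IdempotentFamily 𝓕)

/-- the star set -/
def starSet (C : Set ℕ+) (𝓕 : Set (Set ℕ+)) : Set ℕ+ := C ∩ famShift C 𝓕

include hFil hIde in
lemma starSet_mem {C : Set ℕ+} (hC : C ∈ 𝓕) : starSet C 𝓕 ∈ 𝓕 :=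
  hFil.2 hC (hIde hC)

include hFil hIde in
lemma starSet_shift_mem {C : Set ℕ+} (hC : C ∈ 𝓕) {v : ℕ+} (hv : v ∈ starSet C 𝓕) :
    shiftN (starSet C 𝓕) v ∈ 𝓕 := by
  have hCv : shiftN C v ∈ 𝓕 := hv.2
  have h2 : famShift (shiftN C v) 𝓕 ∈ 𝓕 := hIde hCv
  have : shiftN (starSet C 𝓕) v = shiftN C v ∩ famShift (shiftN C v) 𝓕 := by
    ext m
    simp only [shiftN, starSet, famShift, Set.mem_inter_iff, Set.mem_setOf_eq]
    constructor
    · rintro ⟨h1, h2⟩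
      exact ⟨h1, by convert h2 using 2; ext j; simp [add_assoc]⟩
    · rintro ⟨h1, h2⟩
      exact ⟨h1, by convert h2 using 2; ext j; simp [add_assoc]⟩
  rw [this]
  exact hFil.2 hCv h2

include hFil hSyn hIde in
theorem three_to_two
    (h : ∃ n : ℕ+, shiftN A n ∈ 𝓕) :
    ∃ B : Set ℕ+, B ⊆ A ∧ B.Nonempty ∧
      ∀ F : Finset ℕ+, (F : Set ℕ+) ⊆ B → Syndetic (⋂ f ∈ F, shiftN B f) := by
  obtain ⟨n, hC⟩ := h
  set C := shiftN A n with hCdef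
  set Cs := starSet C 𝓕 with hCs
  have hCsF : Cs ∈ 𝓕 := starSet_mem hFil hIde hC
  set B : Set ℕ+ := (· + n) '' Cs with hB
  have hBA : B ⊆ A := by
    rintro b ⟨c, hc, rfl⟩
    exact hc.1
  have hBne : B.Nonempty := ((hSyn _ hCsF).nonempty).image _
  refine ⟨B, hBA, hBne, fun F hF => ?_⟩
  rcases F.eq_empty_or_nonempty with rfl | hFne
  · simpa using syndetic_univ
  · -- each shiftN B f with f ∈ F equals shiftN Cs c for the c with f = c + n
    have key : ∀ f ∈ F, shiftN B f ∈ 𝓕 := by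
      intro f hf
      obtain ⟨c, hc, rfl⟩ := hF hf
      have : shiftN B (c + n) = shiftN Cs c := by
        ext m
        simp only [shiftN, hB, Set.mem_setOf_eq, Set.mem_image]
        constructor
        · rintro ⟨c', hc', he⟩
          have he' : c' + n = (m + c) + n := by rw [he]; ring
          have : c' = m + c := add_right_cancel he'
          rwa [← this]
        · intro h
          exact ⟨m + c, h, by ring⟩
      rw [this]
      exact starSet_shift_mem hFil hIde hC hc
    exact hSyn _ (filter_biInter hFil F hFne _ key)

end Part1

section Part2

theorem two_to_three {A : Set ℕ+}
    (h : ∃ B : Set ℕ+, B ⊆ A ∧ B.Nonempty ∧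
      ∀ F : Finset ℕ+, (F : Set ℕ+) ⊆ B → Syndetic (⋂ f ∈ F, shiftN B f)) :
    ∃ n : ℕ+, ∃ 𝓕 : Set (Set ℕ+),
      IsFilterFamily 𝓕 ∧ SyndeticFamily 𝓕 ∧ IdempotentFamily 𝓕 ∧ shiftN A n ∈ 𝓕 := by
  obtain ⟨B, hBA, ⟨b₀, hb₀⟩, hB⟩ := h
  set 𝓕 : Set (Set ℕ+) :=
    {D | ∃ F : Finset ℕ+, (F : Set ℕ+) ⊆ B ∧ (⋂ f ∈ F, shiftN B f) ⊆ D} with h𝓕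
  have hup : UpwardClosed 𝓕 := by
    rintro D D' ⟨F, hF, hFD⟩ hDD'
    exact ⟨F, hF, hFD.trans hDD'⟩
  have hfil : IsFilterFamily 𝓕 := by
    refine ⟨hup, ?_⟩
    rintro D D' ⟨F, hF, hFD⟩ ⟨F', hF', hFD'⟩
    refine ⟨F ∪ F', by rw [Finset.coe_union]; exact Set.union_subset hF hF', ?_⟩
    intro m hm
    simp only [Set.mem_iInter, Finset.mem_union] at hm
    constructor
    · exact hFD (by simp only [Set.mem_iInter]; exact fun f hf => hm f (Or.inl hf))
    · exact hFD' (by simp only [Set.mem_iInter]; exact fun f hf => hm f (Or.inr hf))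
  have hsyn : SyndeticFamily 𝓕 := by
    rintro D ⟨F, hF, hFD⟩
    exact (hB F hF).mono hFD
  have hide : IdempotentFamily 𝓕 := by
    rintro D ⟨F, hF, hFD⟩
    refine ⟨F, hF, ?_⟩
    intro m hm
    simp only [Set.mem_iInter] at hm
    refine ⟨F.image (· + m), ?_, ?_⟩
    · intro g hg
      simp only [Finset.coe_image, Set.mem_image, Finset.mem_coe] at hg
      obtain ⟨f, hf, rfl⟩ := hg
      have := hm f hf
      simpa [shiftN, add_comm] using this
    · intro k hk
      simp only [Set.mem_iInter, Finset.mem_image] at hk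
      have : k + m ∈ ⋂ f ∈ F, shiftN B f := by
        simp only [Set.mem_iInter]
        intro f hf
        have := hk (f + m) ⟨f, hf, rfl⟩
        simp only [shiftN, Set.mem_setOf_eq] at this ⊢
        have : (k + m) + f = k + (f + m) := by ring
        rw [this]
        assumption
      exact hFD this
  refine ⟨b₀, 𝓕, hfil, hsyn, hide, ⟨{b₀}, by simpa using hb₀, ?_⟩⟩
  simpa using shiftN_mono hBA b₀

end Part2

section Part3

lemma retTimes_syndetic (S : MinSystem) (y : S.X) (V : Set S.X)
    (hV : IsOpen V) (hyV : y ∈ V) : Syndetic (retTimes S.T y V) := by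
  have hcov : (Set.univ : Set S.X) ⊆ ⋃ i : ℕ+, S.T^[(i : ℕ)] ⁻¹' V := by
    intro z _
    obtain ⟨w, hwV, ⟨i, hi⟩⟩ := (S.minimal z).inter_open_nonempty V hV ⟨y, hyV⟩
    exact Set.mem_iUnion.2 ⟨i, by simpa [hi] using hwV⟩
  obtain ⟨t, ht⟩ := IsCompact.elim_finite_subcover isCompact_univ
    (fun i : ℕ+ => S.T^[(i : ℕ)] ⁻¹' V)
    (fun i => (S.cont.iterate _).isOpen_preimage _ hV) hcov
  have htne : t.Nonempty := by
    by_contra h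
    rw [Finset.not_nonempty_iff_eq_empty] at h
    subst h
    simpa using ht (Set.mem_univ y)
  obtain ⟨N, hN⟩ := Finset.exists_le t
  rw [syndetic_iff]
  refine ⟨N, fun m => Or.inr ?_⟩
  have := ht (Set.mem_univ (S.T^[(m : ℕ)] y))
  simp only [Set.mem_iUnion] at this
  obtain ⟨i, hit, hi⟩ := this
  refine ⟨i, hN i hit, ?_⟩
  simp only [retTimes, Set.mem_setOf_eq, PNat.add_coe]
  rw [add_comm (m:ℕ) (i:ℕ), Function.iterate_add_apply]
  exact hi

theorem one_to_three {A : Set ℕ+} (h : DynSyndetic A) :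
    ∃ n : ℕ+, ∃ 𝓕 : Set (Set ℕ+),
      IsFilterFamily 𝓕 ∧ SyndeticFamily 𝓕 ∧ IdempotentFamily 𝓕 ∧ shiftN A n ∈ 𝓕 := by
  obtain ⟨S, x, U, hU, hUne, hR⟩ := h
  obtain ⟨w, hwU, ⟨n₀, hn₀⟩⟩ := (S.minimal x).inter_open_nonempty U hU hUne
  set y := S.T^[(n₀ : ℕ)] x with hy
  have hn₀' : S.T^[(n₀ : ℕ)] x = w := hn₀
  have hyU : y ∈ U := by rw [hy, hn₀']; exact hwU
  set 𝓕 : Set (Set ℕ+) :=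
    {D | ∃ V : Set S.X, IsOpen V ∧ y ∈ V ∧ retTimes S.T y V ⊆ D} with h𝓕
  have hup : UpwardClosed 𝓕 := by
    rintro D D' ⟨V, h1, h2, h3⟩ hDD'
    exact ⟨V, h1, h2, h3.trans hDD'⟩
  have hfil : IsFilterFamily 𝓕 := by
    refine ⟨hup, ?_⟩
    rintro D D' ⟨V, h1, h2, h3⟩ ⟨V', h1', h2', h3'⟩
    refine ⟨V ∩ V', h1.inter h1', ⟨h2, h2'⟩, ?_⟩
    intro m hm
    exact ⟨h3 hm.1, h3' hm.2⟩
  have hsyn : SyndeticFamily 𝓕 := by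
    rintro D ⟨V, h1, h2, h3⟩
    exact (retTimes_syndetic S y V h1 h2).mono h3
  have hide : IdempotentFamily 𝓕 := by
    rintro D ⟨V, h1, h2, h3⟩
    refine ⟨V, h1, h2, ?_⟩
    intro m hm
    refine ⟨V ∩ S.T^[(m : ℕ)] ⁻¹' V, h1.inter ((S.cont.iterate _).isOpen_preimage _ h1),
      ⟨h2, hm⟩, ?_⟩
    intro k hk
    simp only [shiftN, Set.mem_setOf_eq]
    apply h3
    simp only [retTimes, Set.mem_setOf_eq, PNat.add_coe]
    rw [add_comm (k : ℕ) (m : ℕ), Function.iterate_add_apply]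
    exact hk.2
  refine ⟨n₀, 𝓕, hfil, hsyn, hide, ⟨U, hU, hyU, ?_⟩⟩
  intro m hm
  simp only [shiftN, Set.mem_setOf_eq]
  apply hR
  simp only [retTimes, Set.mem_setOf_eq, PNat.add_coe]
  rw [Function.iterate_add_apply]
  exact hm

end Part3

section MkSystem
open DSTop

variable (x : ℕ → Bool)
variable (hrec : ∀ L, ∃ G, ∀ m, ∃ s, s ≤ G ∧ ∀ k, k ≤ L → x (m + s + k) = x k)

noncomputable instance SsetMetric : MetricSpace (↥(Sset x)) :=
  TopologicalSpace.metrizableSpaceMetric _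

instance SsetCompact : CompactSpace (↥(Sset x)) :=
  isCompact_iff_compactSpace.1 ((Sset_closed x).isCompact)

instance SsetNonempty : Nonempty (↥(Sset x)) := ⟨⟨x, x_mem_Sset x⟩⟩

noncomputable def shT : ↥(Sset x) → ↥(Sset x) := fun z => ⟨sh z.1, Sset_inv x z.1 z.2⟩

lemma shT_cont : Continuous (shT x) :=
  Continuous.subtype_mk (sh_cont.comp continuous_subtype_val) _

lemma shT_iter (m : ℕ) (z : ↥(Sset x)) : ((shT x)^[m] z).1 = sh^[m] z.1 := by
  induction m generalizing z with
  | zero => rfl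
  | succ m ih =>
    rw [Function.iterate_succ_apply, Function.iterate_succ_apply]
    rw [ih (shT x z)]
    rfl

include hrec in
lemma shT_minimal : MinimalMap (shT x) := by
  intro z
  intro w
  rw [mem_closure_iff]
  intro o ho hwo
  -- work through the subtype
  have key : (w : ℕ → Bool) ∈ closure (Subtype.val '' (Set.range fun n : ℕ+ => (shT x)^[(n : ℕ)] z)) := by
    have heq : Subtype.val '' (Set.range fun n : ℕ+ => (shT x)^[(n : ℕ)] z)
        = Set.range fun n : ℕ+ => sh^[(n : ℕ)] z.1 := by
      rw [← Set.range_comp]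
      apply congrArg Set.range
      funext n
      exact shT_iter x (n : ℕ) z
    rw [heq]
    exact Sset_minimal x hrec z.2 w.2
  -- transfer: closure in subtype
  have : w ∈ closure (Set.range fun n : ℕ+ => (shT x)^[(n : ℕ)] z) := by
    rw [closure_subtype]
    exact key
  exact mem_closure_iff.1 this o ho hwo

noncomputable def mkSystem : MinSystem where
  X := ↥(Sset x)
  T := shT x
  cont := shT_cont x
  minimal := shT_minimal x hrec

include hrec in
lemma mkSystem_retTimes :
    retTimes (mkSystem x hrec).T (⟨x, x_mem_Sset x⟩ : ↥(Sset x)) 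
      {w : ↥(Sset x) | w.1 0 = true} = {m : ℕ+ | x (m : ℕ) = true} := by
  ext m
  show ((shT x)^[(m:ℕ)] ⟨x, x_mem_Sset x⟩).1 0 = true ↔ _
  rw [shT_iter]
  show (sh^[(m:ℕ)] x) 0 = true ↔ x (m:ℕ) = true
  rw [sh_iter]
  simp

include hrec in
theorem dyn_of_rec (A : Set ℕ+) (hsub : ∀ m : ℕ+, x (m : ℕ) = true → m ∈ A)
    (a : ℕ) (ha : x a = true) : DynSyndetic A := by
  refine ⟨mkSystem x hrec, ⟨x, x_mem_Sset x⟩, {w : ↥(Sset x) | w.1 0 = true}, ?_, ?_, ?_⟩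
  · have h : IsOpen ((fun w : ↥(Sset x) => w.1 0) ⁻¹' {true}) :=
      (isOpen_discrete _).preimage ((continuous_apply 0).comp continuous_subtype_val)
    exact h
  · refine ⟨⟨sh^[a] x, iter_mem_Sset x a⟩, ?_⟩
    show (sh^[a] x) 0 = true
    rw [sh_iter]
    simpa using ha
  · rw [mkSystem_retTimes]
    intro m hm
    exact hsub m hm

end MkSystem

section Glue

def toN (S : Set ℕ+) : Set ℕ := {k : ℕ | ∃ m : ℕ+, (m : ℕ) = k ∧ m ∈ S}

lemma synd_toN {S : Set ℕ+} (h : Syndetic S) :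
    ∃ N : ℕ, ∀ m : ℕ, ∃ k, k ≤ N ∧ m + k ∈ toN S := by
  rw [syndetic_iff] at h
  obtain ⟨Np, hNp⟩ := h
  refine ⟨(Np : ℕ) + 1, fun m => ?_⟩
  set mp : ℕ+ := ⟨m + 1, Nat.succ_pos m⟩ with hmp
  rcases hNp mp with h | ⟨kp, hkp, hmem⟩
  · exact ⟨1, by omega, ⟨mp, rfl, h⟩⟩
  · refine ⟨1 + (kp : ℕ), ?_, ⟨mp + kp, ?_, hmem⟩⟩
    · have : (kp : ℕ) ≤ (Np : ℕ) := hkp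
      omega
    · rw [PNat.add_coe]
      show (m + 1) + (kp : ℕ) = m + (1 + (kp : ℕ))
      omega

theorem three_to_one {A : Set ℕ+}
    (h : ∃ n : ℕ+, ∃ 𝓕 : Set (Set ℕ+),
      IsFilterFamily 𝓕 ∧ SyndeticFamily 𝓕 ∧ IdempotentFamily 𝓕 ∧ shiftN A n ∈ 𝓕) :
    DynSyndetic A := by
  obtain ⟨n, 𝓕, hfil, hsyn, hide, hC⟩ := h
  set C := shiftN A n with hCdef
  set Cs := starSet C 𝓕 with hCsdef
  have hCsF : Cs ∈ 𝓕 := starSet_mem hfil hide hC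
  have hCsC : Cs ⊆ C := Set.inter_subset_left
  obtain ⟨cstar, hcstar⟩ : Cs.Nonempty := (hsyn _ hCsF).nonempty
  -- the pack data
  set P : Set ℕ := toN ((· + n) '' Cs) with hPdef
  set VVp : Finset ℕ → Set ℕ+ := fun F =>
    Cs ∩ {t : ℕ+ | ∀ f ∈ F, ∀ c : ℕ+, ((c : ℕ) + (n : ℕ) = f ∧ c ∈ Cs) → t + c ∈ Cs} with hVVdef
  have VV_mem : ∀ F : Finset ℕ, VVp F ∈ 𝓕 := by
    intro F
    induction F using Finset.induction_on with
    | empty =>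
      refine hfil.1 hCsF ?_
      intro t ht
      exact ⟨ht, by simp⟩
    | @insert a F hanotmem ih =>
      have hWa : (Cs ∩ {t : ℕ+ | ∀ c : ℕ+, ((c : ℕ) + (n : ℕ) = a ∧ c ∈ Cs) → t + c ∈ Cs}) ∈ 𝓕 := by
        by_cases hex : ∃ c : ℕ+, (c : ℕ) + (n : ℕ) = a ∧ c ∈ Cs
        · obtain ⟨c₀, hc₀a, hc₀⟩ := hex
          refine hfil.1 (hfil.2 hCsF (starSet_shift_mem hfil hide hC hc₀)) ?_
          rintro t ⟨ht1, ht2⟩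
          refine ⟨ht1, fun c ⟨hca, hc⟩ => ?_⟩
          have : c = c₀ := by
            have he : (c : ℕ) = (c₀ : ℕ) := by
              rw [← hc₀a] at hca
              exact Nat.add_right_cancel hca
            exact PNat.coe_injective he
          subst this
          exact ht2
        · refine hfil.1 hCsF ?_
          intro t ht
          exact ⟨ht, fun c hc => absurd ⟨c, hc.1, hc.2⟩ hex⟩
      refine hfil.1 (hfil.2 ih hWa) ?_
      rintro t ⟨⟨ht1, ht2⟩, ⟨_, ht3⟩⟩
      refine ⟨ht1, fun f hf c hc => ?_⟩
      rcases Finset.mem_insert.1 hf with rfl | hf'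
      · exact ht3 c hc
      · exact ht2 f hf' c hc
  set V : Finset ℕ → Set ℕ := fun F => toN (VVp F) with hVdef
  have hsynV : ∀ F, ∃ N : ℕ, ∀ m : ℕ, ∃ k, k ≤ N ∧ m + k ∈ V F :=
    fun F => synd_toN (hsyn _ (VV_mem F))
  set NN : Finset ℕ → ℕ := fun F => (hsynV F).choose with hNNdef
  have hV1 : ∀ F m, ∃ k, k ≤ NN F ∧ m + k ∈ V F := fun F m => (hsynV F).choose_spec m
  have hV2 : ∀ F : Finset ℕ, ↑F ⊆ P → ∀ t ∈ V F, ∀ f ∈ F, t + f ∈ P := by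
    intro F hFP t ht f hf
    obtain ⟨tm, htm, htmem⟩ := ht
    obtain ⟨m', hm', hmem'⟩ := hFP hf
    obtain ⟨c₀, hc₀, hc₀e⟩ := hmem'
    have hfc : (c₀ : ℕ) + (n : ℕ) = f := by
      rw [← hm', ← hc₀e]
      exact (PNat.add_coe c₀ n)
    have hstar : tm + c₀ ∈ Cs := htmem.2 f hf c₀ ⟨hfc, hc₀⟩
    refine ⟨tm + c₀ + n, ?_, ⟨tm + c₀, hstar, rfl⟩⟩
    rw [PNat.add_coe, PNat.add_coe, htm, ← hfc]
    omega
  have ha₀ : ((cstar + n : ℕ+) : ℕ) ∈ P := ⟨cstar + n, rfl, ⟨cstar, hcstar, rfl⟩⟩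
  set pk : DSCore.Pack := ⟨P, V, NN, hV1, hV2, ((cstar + n : ℕ+) : ℕ), ha₀⟩ with hpkdef
  -- apply the construction
  apply dyn_of_rec pk.xx pk.xx_recurrent A
  · intro m hm
    obtain ⟨m', hm', hmem'⟩ := pk.xx_sub_P hm
    obtain ⟨c₀, hc₀, hc₀e⟩ := hmem'
    have : m' = m := PNat.coe_injective hm'
    subst this
    rw [← hc₀e]
    exact hCsC hc₀
  · exact pk.xx_a₀

end Glue


/-- **Theorem A.** For `A ⊆ ℕ` the following are equivalent:
(1) `A` is dynamically syndetic;
(2) there is a nonempty `B ⊆ A` such that for every finite `F ⊆ B` the set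
    `⋂_{f ∈ F} (B − f)` is syndetic;
(3) there is `n ∈ ℕ` such that `A − n` belongs to a syndetic, idempotent filter. -/
theorem dynSyndetic_tfae (A : Set ℕ+) :
    (DynSyndetic A ↔
      ∃ B : Set ℕ+, B ⊆ A ∧ B.Nonempty ∧
        ∀ F : Finset ℕ+, (F : Set ℕ+) ⊆ B → Syndetic (⋂ f ∈ F, shiftN B f)) ∧
    (DynSyndetic A ↔
      ∃ n : ℕ+, ∃ 𝓕 : Set (Set ℕ+),
        IsFilterFamily 𝓕 ∧ SyndeticFamily 𝓕 ∧ IdempotentFamily 𝓕 ∧ shiftN A n ∈ 𝓕) := by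
  constructor
  · constructor
    · intro h
      obtain ⟨n, 𝓕, hfil, hsyn, hide, hmem⟩ := one_to_three h
      exact three_to_two hfil hsyn hide ⟨n, hmem⟩
    · intro h
      exact three_to_one (two_to_three h)
  · constructor
    · exact one_to_three
    · exact three_to_one
end

section
/- Let A ⊆ ℕ. The following are equivalent: (1) A is dynamically central syndetic; (2) there exist a minimal system (X, T), a nonempty open set U ⊆ X, and a point x in the closure of U such that R(x, U) ⊆ A; (3) there exists a subset B ⊆ A such that the point 1_{B ∪ {0}} is uniformly recurrent in the full shift ({0,1}^{ℕ₀}, σ). -/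
open Set

/-- The shift map on the full shift `{0,1}^{ℕ₀}` (here `ℕ₀` is Lean's `ℕ`, including `0`). -/
def shiftMap₀ : (ℕ → Bool) → (ℕ → Bool) := fun ω i => ω (i + 1)

/-- A point is uniformly recurrent if its return-time set to every open neighborhood is
syndetic. -/
def UniformlyRecurrent {X : Type} [TopologicalSpace X] (T : X → X) (x : X) : Prop :=
  ∀ U : Set X, IsOpen U → x ∈ U → Syndetic (retTimes T x U)

open scoped Classical in
/-- The indicator function `1_{B ∪ {0}} ∈ {0,1}^{ℕ₀}` of `B ∪ {0}`, for `B` a set of positive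
integers. -/
noncomputable def indZero (B : Set ℕ+) : ℕ → Bool :=
  fun i => if i = 0 ∨ ∃ b ∈ B, (b : ℕ) = i then true else false

section Auxiliary

open Function Set

lemma shift_iter (w : ℕ → Bool) : ∀ n i, shiftMap₀^[n] w i = w (i + n) := by
  intro n
  induction n generalizing w with
  | zero => intro i; simp
  | succ n ih =>
    intro i
    rw [Function.iterate_succ_apply, ih (shiftMap₀ w) i]
    show w (i + n + 1) = w (i + (n + 1))
    rw [Nat.add_assoc]

lemma continuous_shift : Continuous shiftMap₀ :=
  continuous_pi fun i => continuous_apply (i + 1)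

lemma indZero_eq_true {B : Set ℕ+} {i : ℕ} :
    indZero B i = true ↔ (i = 0 ∨ ∃ b ∈ B, (b : ℕ) = i) := by
  classical
  by_cases h : (i = 0 ∨ ∃ b ∈ B, (b : ℕ) = i) <;> simp [indZero, h]

lemma syndetic_of_bound {A : Set ℕ+} (N : ℕ+)
    (h : ∀ m : ℕ+, ∃ k : ℕ+, k ≤ N ∧ m + k ∈ A) : Syndetic A := by
  refine ⟨N, Set.eq_univ_of_forall fun m => ?_⟩
  obtain ⟨k, hk, hmk⟩ := h m
  exact Set.mem_union_right _ (Set.mem_biUnion hk hmk)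

lemma syndetic_bound {A : Set ℕ+} (h : Syndetic A) :
    ∃ N : ℕ+, ∀ m : ℕ+, ∃ k : ℕ+, k ≤ N ∧ m + k ∈ A := by
  obtain ⟨N, hN⟩ := h
  refine ⟨N + 1, fun m => ?_⟩
  have hmem : (m + 1 : ℕ+) ∈ A ∪ ⋃ k ∈ {k : ℕ+ | k ≤ N}, shiftN A k := by
    rw [hN]; exact Set.mem_univ _
  rcases hmem with h1 | h2
  · exact ⟨1, le_of_lt (PNat.lt_add_left 1 N), h1⟩
  · obtain ⟨k, hk, hmk⟩ := Set.mem_iUnion₂.mp h2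
    refine ⟨1 + k, ?_, ?_⟩
    · rw [add_comm]
      exact add_le_add hk le_rfl
    · have : m + (1 + k) = m + 1 + k := by rw [add_assoc]
      rw [this]
      exact hmk

lemma iter_mem {Z : Type*} {P : Z → Z} {M : Set Z} (hinv : ∀ z ∈ M, P z ∈ M) :
    ∀ (n : ℕ) {z : Z}, z ∈ M → P^[n] z ∈ M := by
  intro n
  induction n with
  | zero => intro z hz; simpa using hz
  | succ n ih =>
    intro z hz
    rw [Function.iterate_succ_apply]
    exact ih (hinv z hz)

lemma exists_minimal_subsystem {Z : Type*} [TopologicalSpace Z] {P : Z → Z} (hP : Continuous P)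
    {N : Set Z} (hNcpt : IsCompact N) (hNcl : IsClosed N) (hNne : N.Nonempty)
    (hNinv : ∀ z ∈ N, P z ∈ N) :
    ∃ M : Set Z, M ⊆ N ∧ M.Nonempty ∧ IsClosed M ∧ IsCompact M ∧ (∀ z ∈ M, P z ∈ M) ∧
      (∀ w ∈ M, ∀ z ∈ M, ∀ V : Set Z, IsOpen V → z ∈ V → ∃ n : ℕ+, P^[(n : ℕ)] w ∈ V) := by
  set C : Set (Set Z) := {C | C ⊆ N ∧ C.Nonempty ∧ IsClosed C ∧ ∀ z ∈ C, P z ∈ C} with hC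
  have hch : ∀ c ⊆ C, IsChain (· ⊆ ·) c → c.Nonempty → ∃ lb ∈ C, ∀ s ∈ c, lb ⊆ s := by
    intro c hc hchain hcne
    have hdir : DirectedOn (· ⊇ ·) c := by
      intro a ha b hb
      rcases hchain.total ha hb with h | h
      · exact ⟨a, ha, subset_rfl, h⟩
      · exact ⟨b, hb, h, subset_rfl⟩
    haveI : Nonempty c := hcne.to_subtype
    have hne : (⋂₀ c).Nonempty :=
      IsCompact.nonempty_sInter_of_directed_nonempty_isCompact_isClosed hdir
        (fun U hU => (hc hU).2.1)
        (fun U hU => IsCompact.of_isClosed_subset hNcpt (hc hU).2.2.1 (hc hU).1)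
        (fun U hU => (hc hU).2.2.1)
    refine ⟨⋂₀ c, ⟨?_, hne, isClosed_sInter fun s hs => (hc hs).2.2.1, ?_⟩,
      fun s hs => Set.sInter_subset_of_mem hs⟩
    · obtain ⟨s, hs⟩ := hcne
      exact (Set.sInter_subset_of_mem hs).trans (hc hs).1
    · intro z hz
      exact fun s hs => (hc hs).2.2.2 z (hz s hs)
  obtain ⟨M, hMN, hMmin⟩ := zorn_superset_nonempty C hch N ⟨subset_rfl, hNne, hNcl, hNinv⟩
  obtain ⟨hMC, hMlb⟩ := hMmin
  obtain ⟨hMsub, hMne, hMcl, hMinv⟩ := hMC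
  have hMcpt : IsCompact M := IsCompact.of_isClosed_subset hNcpt hMcl hMsub
  refine ⟨M, hMsub, hMne, hMcl, hMcpt, hMinv, ?_⟩
  intro w hw z hz V hV hzV
  set C' : Set Z := closure (Set.range fun n : ℕ+ => P^[(n : ℕ)] w) with hC'
  have hrange : (Set.range fun n : ℕ+ => P^[(n : ℕ)] w) ⊆ M := by
    rintro _ ⟨n, rfl⟩
    exact iter_mem hMinv _ hw
  have hC'M : C' ⊆ M := closure_minimal hrange hMcl
  have hC'mem : C' ∈ C := by
    refine ⟨hC'M.trans hMsub, ⟨P^[(1 : ℕ)] w, subset_closure ⟨1, rfl⟩⟩, isClosed_closure, ?_⟩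
    intro y hy
    have h1 : P '' (Set.range fun n : ℕ+ => P^[(n : ℕ)] w)
        ⊆ (Set.range fun n : ℕ+ => P^[(n : ℕ)] w) := by
      rintro _ ⟨_, ⟨n, rfl⟩, rfl⟩
      refine ⟨n + 1, ?_⟩
      show P^[((n : ℕ) + 1)] w = P (P^[(n : ℕ)] w)
      rw [Function.iterate_succ_apply']
    have h2 : P y ∈ closure (P '' (Set.range fun n : ℕ+ => P^[(n : ℕ)] w)) :=
      image_closure_subset_closure_image hP (Set.mem_image_of_mem P hy)
    exact closure_mono h1 h2
  have : M ⊆ C' := hMlb hC'mem hC'M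
  have hzC' : z ∈ C' := this hz
  obtain ⟨y, hyV, hyr⟩ := mem_closure_iff.mp hzC' V hV hzV
  obtain ⟨n, rfl⟩ := hyr
  exact ⟨n, hyV⟩

lemma syndetic_returns {Z : Type} [TopologicalSpace Z] {P : Z → Z} (hP : Continuous P)
    {M : Set Z} (hMcpt : IsCompact M) (hMinv : ∀ z ∈ M, P z ∈ M)
    (hmin : ∀ w ∈ M, ∀ z ∈ M, ∀ V : Set Z, IsOpen V → z ∈ V → ∃ n : ℕ+, P^[(n : ℕ)] w ∈ V)
    {z : Z} (hz : z ∈ M) {V : Set Z} (hV : IsOpen V) (hzV : z ∈ V) :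
    Syndetic (retTimes P z V) := by
  have hcover : M ⊆ ⋃ n : ℕ+, P^[(n : ℕ)] ⁻¹' V := by
    intro w hw
    obtain ⟨n, hn⟩ := hmin w hw z hz V hV hzV
    exact Set.mem_iUnion.mpr ⟨n, hn⟩
  obtain ⟨t, ht⟩ := hMcpt.elim_finite_subcover _
    (fun n : ℕ+ => hV.preimage (hP.iterate _)) hcover
  have htne : t.Nonempty := by
    obtain ⟨n, hn, _⟩ := Set.mem_iUnion₂.mp (ht hz)
    exact ⟨n, hn⟩
  refine syndetic_of_bound (t.max' htne) fun m => ?_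
  have hm : P^[(m : ℕ)] z ∈ M := iter_mem hMinv _ hz
  obtain ⟨n, hnt, hnV⟩ := Set.mem_iUnion₂.mp (ht hm)
  refine ⟨n, t.le_max' n hnt, ?_⟩
  show P^[((m + n : ℕ+) : ℕ)] z ∈ V
  have hcast : ((m + n : ℕ+) : ℕ) = (n : ℕ) + (m : ℕ) := by
    rw [PNat.add_coe, Nat.add_comm]
  rw [hcast, Function.iterate_add_apply]
  exact hnV

lemma periodic_closure_mem (S : MinSystem) (x : S.X) (d : ℕ+) (hper : S.T^[(d : ℕ)] x = x)
    {U : Set S.X} (hxc : x ∈ closure U) : x ∈ U := by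
  have hq : ∀ q : ℕ, S.T^[(d : ℕ) * q] x = x := by
    intro q
    induction q with
    | zero => simp
    | succ q ih =>
      rw [Nat.mul_succ, Function.iterate_add_apply, hper, ih]
  have hmem : ∀ m : ℕ, S.T^[m] x ∈ (fun i : ℕ => S.T^[i] x) '' (Set.Iio (d : ℕ)) := by
    intro m
    have h1 : S.T^[m] x = S.T^[m % (d : ℕ)] x := by
      conv_lhs => rw [← Nat.mod_add_div m (d : ℕ)]
      rw [Function.iterate_add_apply, hq]
    rw [h1]
    exact ⟨m % (d : ℕ), Nat.mod_lt _ d.pos, rfl⟩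
  have hfin : ((fun i : ℕ => S.T^[i] x) '' (Set.Iio (d : ℕ))).Finite :=
    (Set.finite_Iio _).image _
  have hXsub : (Set.univ : Set S.X) ⊆ (fun i : ℕ => S.T^[i] x) '' (Set.Iio (d : ℕ)) := by
    rw [← dense_iff_closure_eq.mp (S.minimal x)]
    refine closure_minimal ?_ hfin.isClosed
    rintro _ ⟨n, rfl⟩
    exact hmem (n : ℕ)
  have hUfin : U.Finite := hfin.subset fun u _ => hXsub (Set.mem_univ u)
  rwa [hUfin.isClosed.closure_eq] at hxc

end Auxiliary

section MainTwo

open Function Set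

lemma main_to_symbolic {A : Set ℕ+} (S : MinSystem) (U : Set S.X) (x : S.X)
    (hU : IsOpen U) (hxc : x ∈ closure U) (hRA : retTimes S.T x U ⊆ A) :
    ∃ B : Set ℕ+, B ⊆ A ∧ UniformlyRecurrent shiftMap₀ (indZero B) := by
  classical
  -- Step 1: shrink U to U' with x ∈ closure U' and closure U' ⊆ U ∪ {x}
  have hx : ∀ k : ℕ, ∃ y, y ∈ U ∧ dist x y < 1 / (k + 1) :=
    fun k => Metric.mem_closure_iff.mp hxc (1 / (k + 1)) (by positivity)
  choose xk hxkU hxkd using hx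
  have hr : ∀ k : ℕ, ∃ r : ℝ, 0 < r ∧ r ≤ 1 / (k + 1) ∧ Metric.closedBall (xk k) r ⊆ U := by
    intro k
    obtain ⟨ρ, hρ, hball⟩ := Metric.isOpen_iff.mp hU (xk k) (hxkU k)
    refine ⟨min (ρ / 2) (1 / (k + 1)), by positivity, min_le_right _ _, ?_⟩
    refine (Metric.closedBall_subset_ball ?_).trans hball
    calc min (ρ / 2) (1 / (k + 1)) ≤ ρ / 2 := min_le_left _ _
      _ < ρ := by linarith
  choose rk hrk0 hrkle hrkU using hr
  set U' : Set S.X := ⋃ k : ℕ, Metric.ball (xk k) (rk k) with hU'def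
  have hU'open : IsOpen U' := isOpen_iUnion fun k => Metric.isOpen_ball
  have hU'U : U' ⊆ U :=
    Set.iUnion_subset fun k => Metric.ball_subset_closedBall.trans (hrkU k)
  have hxU' : x ∈ closure U' := by
    rw [Metric.mem_closure_iff]
    intro ε hε
    obtain ⟨k, hk⟩ := exists_nat_one_div_lt hε
    exact ⟨xk k, Set.mem_iUnion.mpr ⟨k, Metric.mem_ball_self (hrk0 k)⟩,
      lt_trans (hxkd k) hk⟩
  have hclU' : closure U' ⊆ U ∪ {x} := by
    intro z hz
    by_cases hzx : z = x
    · exact Or.inr (by simp [hzx])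
    · left
      have hd : 0 < dist z x := dist_pos.mpr hzx
      obtain ⟨K, hK⟩ := exists_nat_one_div_lt (show (0:ℝ) < dist z x / 2 by linarith)
      have hsplit : U' ⊆ (⋃ k ∈ Finset.range K, Metric.closedBall (xk k) (rk k)) ∪
          Metric.closedBall x (2 / (K + 1)) := by
        intro w hw
        obtain ⟨k, hk⟩ := Set.mem_iUnion.mp hw
        by_cases hkK : k < K
        · exact Or.inl (Set.mem_biUnion (Finset.mem_range.mpr hkK)
            (Metric.ball_subset_closedBall hk))
        · right
          push_neg at hkK
          have h2 : dist w (xk k) < rk k := Metric.mem_ball.mp hk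
          have h3 : dist (xk k) x < 1 / (k + 1) := by rw [dist_comm]; exact hxkd k
          have h4 : (1:ℝ) / (k + 1) ≤ 1 / (K + 1) := by
            apply one_div_le_one_div_of_le (by positivity)
            have : (K:ℝ) ≤ (k:ℝ) := by exact_mod_cast hkK
            linarith
          have h5 := hrkle k
          rw [Metric.mem_closedBall]
          calc dist w x ≤ dist w (xk k) + dist (xk k) x := dist_triangle _ _ _
            _ ≤ 1 / (k + 1) + 1 / (k + 1) := by linarith
            _ ≤ 1 / (K + 1) + 1 / (K + 1) := by linarith
            _ = 2 / (K + 1) := by ring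
      have hclosed : IsClosed ((⋃ k ∈ Finset.range K, Metric.closedBall (xk k) (rk k)) ∪
          Metric.closedBall x (2 / (K + 1))) := by
        refine IsClosed.union ?_ Metric.isClosed_closedBall
        exact Set.Finite.isClosed_biUnion (Finset.range K).finite_toSet
          fun k _ => Metric.isClosed_closedBall
      rcases (closure_minimal hsplit hclosed) hz with hz1 | hz2
      · obtain ⟨k, _, hk⟩ := Set.mem_iUnion₂.mp hz1
        exact hrkU k hk
      · exfalso
        have h6 : dist z x ≤ 2 / (K + 1) := Metric.mem_closedBall.mp hz2
        have h7 : (2:ℝ) / (K + 1) = 2 * (1 / (K + 1)) := by ring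
        linarith
  -- Step 2: the symbolic point ω and the product orbit closure N
  set R' : Set ℕ+ := retTimes S.T x U' with hR'
  set ω : ℕ → Bool := indZero R' with hω
  have hω0 : ω 0 = true := indZero_eq_true.mpr (Or.inl rfl)
  have hωiff : ∀ n : ℕ+, (ω (n : ℕ) = true ↔ S.T^[(n : ℕ)] x ∈ U') := by
    intro n
    rw [hω, indZero_eq_true]
    constructor
    · rintro (h0 | ⟨b, hb, hbn⟩)
      · exact absurd h0 n.pos.ne'
      · have hbe : b = n := PNat.coe_injective hbn
        rw [← hbe]
        exact hb
    · intro h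
      exact Or.inr ⟨n, h, rfl⟩
  set P : S.X × (ℕ → Bool) → S.X × (ℕ → Bool) := Prod.map S.T shiftMap₀ with hP
  have hPc : Continuous P := S.cont.prodMap continuous_shift
  set g : ℕ → S.X × (ℕ → Bool) := fun m => P^[m] (x, ω) with hg
  have hgm : ∀ m, g m = (S.T^[m] x, shiftMap₀^[m] ω) := by
    intro m
    rw [hg]
    simp [hP, Prod.map_iterate]
  set N : Set (S.X × (ℕ → Bool)) := closure (Set.range g) with hN
  have hginv : P '' Set.range g ⊆ Set.range g := by
    rintro _ ⟨_, ⟨m, rfl⟩, rfl⟩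
    exact ⟨m + 1, Function.iterate_succ_apply' P m (x, ω)⟩
  have hNinv : ∀ z ∈ N, P z ∈ N := by
    intro z hz
    have h2 : P z ∈ closure (P '' Set.range g) :=
      image_closure_subset_closure_image hPc (Set.mem_image_of_mem P hz)
    exact closure_mono hginv h2
  have hNcl : IsClosed N := isClosed_closure
  have hNcpt : IsCompact N := hNcl.isCompact
  have hNne : N.Nonempty := ⟨(x, ω), subset_closure ⟨0, rfl⟩⟩
  -- Fact 6a
  have h6a : ∀ z ∈ N, z.1 ∈ U' → z.2 0 = true := by
    have hclosed : IsClosed ((Prod.fst ⁻¹' U')ᶜ ∪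
        {z : S.X × (ℕ → Bool) | z.2 0 = true}) := by
      refine IsClosed.union (isClosed_compl_iff.mpr (hU'open.preimage continuous_fst)) ?_
      have : {z : S.X × (ℕ → Bool) | z.2 0 = true}
          = (fun z : S.X × (ℕ → Bool) => z.2 0) ⁻¹' {true} := rfl
      rw [this]
      exact (isClosed_discrete _).preimage ((continuous_apply 0).comp continuous_snd)
    have hrange : Set.range g ⊆ (Prod.fst ⁻¹' U')ᶜ ∪
        {z : S.X × (ℕ → Bool) | z.2 0 = true} := by
      rintro _ ⟨m, rfl⟩
      rw [hgm m]
      by_cases hmU : S.T^[m] x ∈ U'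
      · right
        show shiftMap₀^[m] ω 0 = true
        rw [shift_iter, Nat.zero_add]
        rcases Nat.eq_zero_or_pos m with rfl | hm
        · exact hω0
        · exact (hωiff ⟨m, hm⟩).mpr hmU
      · exact Or.inl hmU
    intro z hz hzU
    rcases (closure_minimal hrange hclosed) hz with h | h
    · exact absurd hzU h
    · exact h
  -- Fact 6b
  have h6b : ∀ n : ℕ+, ∀ z ∈ N, z.2 (n : ℕ) = true → S.T^[(n : ℕ)] z.1 ∈ closure U' := by
    intro n
    have hclosed : IsClosed ({z : S.X × (ℕ → Bool) | z.2 (n : ℕ) = true}ᶜ ∪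
        {z : S.X × (ℕ → Bool) | S.T^[(n : ℕ)] z.1 ∈ closure U'}) := by
      refine IsClosed.union ?_ ?_
      · apply isClosed_compl_iff.mpr
        have : {z : S.X × (ℕ → Bool) | z.2 (n : ℕ) = true}
            = (fun z : S.X × (ℕ → Bool) => z.2 (n : ℕ)) ⁻¹' {true} := rfl
        rw [this]
        exact (isOpen_discrete _).preimage ((continuous_apply (n : ℕ)).comp continuous_snd)
      · exact isClosed_closure.preimage ((S.cont.iterate (n : ℕ)).comp continuous_fst)
    have hrange : Set.range g ⊆ {z : S.X × (ℕ → Bool) | z.2 (n : ℕ) = true}ᶜ ∪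
        {z : S.X × (ℕ → Bool) | S.T^[(n : ℕ)] z.1 ∈ closure U'} := by
      rintro _ ⟨m, rfl⟩
      rw [hgm m]
      by_cases hb : shiftMap₀^[m] ω (n : ℕ) = true
      · right
        show S.T^[(n : ℕ)] (S.T^[m] x) ∈ closure U'
        rw [shift_iter] at hb
        have hpos : 0 < (n : ℕ) + m := by
          have := n.pos
          omega
        have hmem : S.T^[(((⟨(n : ℕ) + m, hpos⟩ : ℕ+)) : ℕ)] x ∈ U' :=
          (hωiff ⟨(n : ℕ) + m, hpos⟩).mp hb
        rw [← Function.iterate_add_apply]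
        exact subset_closure hmem
      · exact Or.inl hb
    intro z hz hzn
    rcases (closure_minimal hrange hclosed) hz with h | h
    · exact absurd hzn h
    · exact h
  -- Step 3: minimal subsystem and the fiber point
  obtain ⟨M, hMN, hMne, hMcl, hMcpt, hMinv, hmin⟩ :=
    exists_minimal_subsystem hPc hNcpt hNcl hNne hNinv
  have honto : ∀ y : S.X, ∃ ζ, (y, ζ) ∈ M := by
    intro y
    have hKcl : IsClosed (Prod.fst '' M) := (hMcpt.image continuous_fst).isClosed
    obtain ⟨z0, hz0⟩ := hMne
    have hrange : Set.range (fun n : ℕ+ => S.T^[(n : ℕ)] z0.1) ⊆ Prod.fst '' M := by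
      rintro _ ⟨n, rfl⟩
      refine ⟨P^[(n : ℕ)] z0, iter_mem hMinv _ hz0, ?_⟩
      rw [hP]
      simp [Prod.map_iterate]
    have hy : y ∈ closure (Set.range fun n : ℕ+ => S.T^[(n : ℕ)] z0.1) := by
      rw [dense_iff_closure_eq.mp (S.minimal z0.1)]
      exact Set.mem_univ y
    obtain ⟨z, hzM, hzy⟩ := (closure_minimal hrange hKcl) hy
    refine ⟨z.2, ?_⟩
    have : z = (y, z.2) := by
      rw [← hzy]
    rwa [this] at hzM
  have hQ : ∃ ζ, (x, ζ) ∈ M ∧ ζ 0 = true := by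
    have hScl : IsClosed {z : S.X × (ℕ → Bool) | z.2 0 = true} := by
      have : {z : S.X × (ℕ → Bool) | z.2 0 = true}
          = (fun z : S.X × (ℕ → Bool) => z.2 0) ⁻¹' {true} := rfl
      rw [this]
      exact (isClosed_discrete _).preimage ((continuous_apply 0).comp continuous_snd)
    have hQcpt : IsCompact (M ∩ {z : S.X × (ℕ → Bool) | z.2 0 = true}) :=
      hMcpt.inter_right hScl
    have hQimg : IsClosed (Prod.fst '' (M ∩ {z : S.X × (ℕ → Bool) | z.2 0 = true})) :=
      (hQcpt.image continuous_fst).isClosed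
    have hsub : U' ⊆ Prod.fst '' (M ∩ {z : S.X × (ℕ → Bool) | z.2 0 = true}) := by
      intro y hy
      obtain ⟨ζ, hζ⟩ := honto y
      exact ⟨(y, ζ), ⟨hζ, h6a _ (hMN hζ) hy⟩, rfl⟩
    obtain ⟨z, ⟨hzM, hz0⟩, hzx⟩ := (closure_minimal hsub hQimg) hxU'
    refine ⟨z.2, ?_, hz0⟩
    have : z = (x, z.2) := by rw [← hzx]
    rwa [this] at hzM
  obtain ⟨ζ, hζM, hζ0⟩ := hQ
  -- Step 4: B and its properties
  set B : Set ℕ+ := {n : ℕ+ | ζ (n : ℕ) = true} with hB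
  have hBA : B ⊆ A := by
    intro n hn
    have h1 : S.T^[(n : ℕ)] x ∈ closure U' := h6b n _ (hMN hζM) hn
    rcases hclU' h1 with h2 | h2
    · exact hRA h2
    · have hxx : S.T^[(n : ℕ)] x = x := h2
      have hxU : x ∈ U := periodic_closure_mem S x n hxx hxc
      refine hRA ?_
      show S.T^[(n : ℕ)] x ∈ U
      rw [hxx]
      exact hxU
  have hζeq : ζ = indZero B := by
    funext i
    rcases Nat.eq_zero_or_pos i with rfl | hi
    · rw [hζ0]
      exact (indZero_eq_true.mpr (Or.inl rfl)).symm
    · by_cases h : ζ i = true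
      · rw [h]
        exact (indZero_eq_true.mpr (Or.inr ⟨⟨i, hi⟩, h, rfl⟩)).symm
      · have h' : ζ i = false := by
          cases hv : ζ i
          · rfl
          · exact absurd hv h
        rw [h']
        cases hv : indZero B i
        · rfl
        · rcases indZero_eq_true.mp hv with h0 | ⟨b, hb, hbi⟩
          · omega
          · have hb' : ζ (b : ℕ) = true := hb
            rw [hbi] at hb'
            exact absurd hb' h
  refine ⟨B, hBA, ?_⟩
  rw [← hζeq]
  intro W hW hζW
  have hzV : (x, ζ) ∈ Prod.snd ⁻¹' W := hζW
  have hsynd := syndetic_returns hPc hMcpt hMinv hmin hζM (hW.preimage continuous_snd) hzV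
  have heq : retTimes P (x, ζ) (Prod.snd ⁻¹' W) = retTimes shiftMap₀ ζ W := by
    ext n
    show P^[(n : ℕ)] (x, ζ) ∈ Prod.snd ⁻¹' W ↔ shiftMap₀^[(n : ℕ)] ζ ∈ W
    rw [hP]
    simp [Prod.map_iterate]
  rwa [heq] at hsynd

end MainTwo

section MainThree

open Function Set

lemma symbolic_to_dyn {A B : Set ℕ+} (hBA : B ⊆ A)
    (hUR : UniformlyRecurrent shiftMap₀ (indZero B)) : DynCentralSyndetic A := by
  classical
  set η : ℕ → Bool := indZero B with hηdef
  have hη0 : η 0 = true := indZero_eq_true.mpr (Or.inl rfl)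
  have hcont : Continuous shiftMap₀ := continuous_shift
  set f : ℕ+ → (ℕ → Bool) := fun n => shiftMap₀^[(n : ℕ)] η with hf
  set Y : Set (ℕ → Bool) := closure (Set.range f) with hY
  have hret_ne : ∀ W : Set (ℕ → Bool), IsOpen W → η ∈ W →
      ∃ n : ℕ+, shiftMap₀^[(n : ℕ)] η ∈ W := by
    intro W hW hηW
    obtain ⟨N, hN⟩ := syndetic_bound (hUR W hW hηW)
    obtain ⟨k, _, hk⟩ := hN 1
    exact ⟨1 + k, hk⟩
  have hηY : η ∈ Y := by
    rw [hY, mem_closure_iff]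
    intro o ho hηo
    obtain ⟨n, hn⟩ := hret_ne o ho hηo
    exact ⟨f n, hn, ⟨n, rfl⟩⟩
  -- (α): η is in the closure of every positive orbit from Y
  have alpha : ∀ w ∈ Y, η ∈ closure (Set.range fun n : ℕ+ => shiftMap₀^[(n : ℕ)] w) := by
    intro w hw
    rw [mem_closure_iff]
    intro W hW hηW
    obtain ⟨I, u, hu, hIu⟩ := isOpen_pi_iff.mp hW η hηW
    set C : Set (ℕ → Bool) := {ξ | ∀ i ∈ I, ξ i = η i} with hC
    have hCW : C ⊆ W := by
      intro ξ hξ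
      apply hIu
      intro i hi
      have := hξ i (Finset.mem_coe.mp hi)
      rw [this]
      exact (hu i (Finset.mem_coe.mp hi)).2
    have hCopen : IsOpen C := by
      have hCe : C = ⋂ i ∈ I, (fun ξ : ℕ → Bool => ξ i) ⁻¹' {η i} := by
        ext ξ
        simp [hC]
      rw [hCe]
      exact isOpen_biInter_finset fun i _ =>
        (isOpen_discrete _).preimage (continuous_apply i)
    have hηC : η ∈ C := fun i _ => rfl
    obtain ⟨N, hN⟩ := syndetic_bound (hUR C hCopen hηC)
    set L : ℕ := I.sup id + (N : ℕ) + 1 with hL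
    set C' : Set (ℕ → Bool) := {ξ | ∀ i < L, ξ i = w i} with hC'
    have hC'open : IsOpen C' := by
      have hC'e : C' = ⋂ i ∈ Finset.range L, (fun ξ : ℕ → Bool => ξ i) ⁻¹' {w i} := by
        ext ξ
        simp [hC', Finset.mem_range]
      rw [hC'e]
      exact isOpen_biInter_finset fun i _ =>
        (isOpen_discrete _).preimage (continuous_apply i)
    have hwC' : w ∈ C' := fun i _ => rfl
    have hmeet : (C' ∩ Set.range f).Nonempty := by
      rw [hY] at hw
      exact mem_closure_iff.mp hw C' hC'open hwC'
    obtain ⟨ξ, hξC', hξr⟩ := hmeet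
    obtain ⟨m, rfl⟩ := hξr
    obtain ⟨j, hjN, hj⟩ := hN m
    refine ⟨shiftMap₀^[(j : ℕ)] w, hCW ?_, ⟨j, rfl⟩⟩
    intro i hi
    rw [shift_iter]
    have hiL : i + (j : ℕ) < L := by
      have h1 : i ≤ I.sup id := Finset.le_sup (f := id) hi
      have h2 : (j : ℕ) ≤ (N : ℕ) := hjN
      omega
    have hfm : f m (i + (j : ℕ)) = w (i + (j : ℕ)) := hξC' (i + (j : ℕ)) hiL
    have hfm2 : f m (i + (j : ℕ)) = η (i + (j : ℕ) + (m : ℕ)) := by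
      rw [hf]
      exact shift_iter η (m : ℕ) (i + (j : ℕ))
    have hjmem : shiftMap₀^[((m + j : ℕ+) : ℕ)] η ∈ C := hj
    have hji := hjmem i hi
    rw [shift_iter] at hji
    rw [← hfm, hfm2]
    rw [show i + (j : ℕ) + (m : ℕ) = i + ((m + j : ℕ+) : ℕ) by rw [PNat.add_coe]; omega]
    exact hji
  -- orbit density
  have orbdense : ∀ w ∈ Y, ∀ v ∈ Y,
      v ∈ closure (Set.range fun n : ℕ+ => shiftMap₀^[(n : ℕ)] w) := by
    intro w hw
    set O : Set (ℕ → Bool) := closure (Set.range fun n : ℕ+ => shiftMap₀^[(n : ℕ)] w) with hO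
    have hβ : ∀ m : ℕ, shiftMap₀^[m] η ∈ O := by
      intro m
      have hsub : shiftMap₀^[m] '' (Set.range fun n : ℕ+ => shiftMap₀^[(n : ℕ)] w)
          ⊆ Set.range fun n : ℕ+ => shiftMap₀^[(n : ℕ)] w := by
        rintro _ ⟨_, ⟨n, rfl⟩, rfl⟩
        have hpos : 0 < m + (n : ℕ) := by
          have := n.pos
          omega
        refine ⟨⟨m + (n : ℕ), hpos⟩, ?_⟩
        show shiftMap₀^[m + (n : ℕ)] w = shiftMap₀^[m] (shiftMap₀^[(n : ℕ)] w)
        rw [Function.iterate_add_apply]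
      have h1 : shiftMap₀^[m] η ∈ closure
          (shiftMap₀^[m] '' (Set.range fun n : ℕ+ => shiftMap₀^[(n : ℕ)] w)) :=
        image_closure_subset_closure_image (hcont.iterate m)
          (Set.mem_image_of_mem _ (alpha w hw))
      exact closure_mono hsub h1
    intro v hv
    rw [hY] at hv
    have : Y ⊆ O := by
      rw [hY]
      apply closure_minimal _ isClosed_closure
      rintro _ ⟨n, rfl⟩
      exact hβ (n : ℕ)
    exact this hv
  -- build the minimal system on Y
  letI msig : MetricSpace (ℕ → Bool) := PiNat.metricSpace
  have hYcl : IsClosed Y := isClosed_closure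
  haveI hYcpt : CompactSpace Y := isCompact_iff_compactSpace.mp hYcl.isCompact
  have hmaps : ∀ z : Y, shiftMap₀ (z : ℕ → Bool) ∈ Y := by
    intro z
    have h1 : shiftMap₀ '' Y ⊆ Y := by
      rw [hY]
      refine (image_closure_subset_closure_image hcont).trans (closure_mono ?_)
      rintro _ ⟨_, ⟨n, rfl⟩, rfl⟩
      refine ⟨n + 1, ?_⟩
      show shiftMap₀^[((n + 1 : ℕ+) : ℕ)] η = shiftMap₀ (shiftMap₀^[(n : ℕ)] η)
      rw [PNat.add_coe, PNat.one_coe, Function.iterate_succ_apply']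
    exact h1 ⟨(z : ℕ → Bool), z.2, rfl⟩
  set TY : Y → Y := fun z => ⟨shiftMap₀ (z : ℕ → Bool), hmaps z⟩ with hTY
  have hTYc : Continuous TY :=
    Continuous.subtype_mk (hcont.comp continuous_subtype_val) _
  have hTYiter : ∀ (n : ℕ) (z : Y), ((TY^[n] z : Y) : ℕ → Bool) = shiftMap₀^[n] (z : ℕ → Bool) := by
    intro n
    induction n with
    | zero => intro z; rfl
    | succ n ih =>
      intro z
      rw [Function.iterate_succ_apply', Function.iterate_succ_apply']
      show shiftMap₀ ((TY^[n] z : Y) : ℕ → Bool) = shiftMap₀ (shiftMap₀^[n] (z : ℕ → Bool))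
      rw [ih z]
  have hmin : MinimalMap TY := by
    intro z
    rw [dense_iff_closure_eq, Set.eq_univ_iff_forall]
    intro y
    rw [closure_subtype]
    have himg : (Subtype.val '' Set.range fun n : ℕ+ => TY^[(n : ℕ)] z)
        = Set.range fun n : ℕ+ => shiftMap₀^[(n : ℕ)] (z : ℕ → Bool) := by
      ext ξ
      constructor
      · rintro ⟨_, ⟨n, rfl⟩, rfl⟩
        exact ⟨n, (hTYiter (n : ℕ) z).symm⟩
      · rintro ⟨n, rfl⟩
        exact ⟨TY^[(n : ℕ)] z, ⟨n, rfl⟩, hTYiter (n : ℕ) z⟩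
    rw [himg]
    exact orbdense (z : ℕ → Bool) z.2 (y : ℕ → Bool) y.2
  set Sys : MinSystem :=
    { X := Y, met := inferInstance, cpt := hYcpt, nem := ⟨⟨η, hηY⟩⟩,
      T := TY, cont := hTYc, minimal := hmin } with hSys
  refine ⟨Sys, ⟨η, hηY⟩, {z : Y | (z : ℕ → Bool) 0 = true}, ?_, hη0, ?_⟩
  · have : {z : Y | (z : ℕ → Bool) 0 = true}
        = (fun z : Y => (z : ℕ → Bool) 0) ⁻¹' {true} := rfl
    rw [this]
    exact (isOpen_discrete _).preimage ((continuous_apply 0).comp continuous_subtype_val)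
  · intro n hn
    have h1 : ((TY^[(n : ℕ)] ⟨η, hηY⟩ : Y) : ℕ → Bool) 0 = true := hn
    rw [hTYiter] at h1
    rw [shift_iter, Nat.zero_add] at h1
    rcases indZero_eq_true.mp h1 with h0 | ⟨b, hb, hbn⟩
    · exact absurd h0 n.pos.ne'
    · have : b = n := PNat.coe_injective hbn
      rw [this] at hb
      exact hBA hb

end MainThree

/-- For `A ⊆ ℕ` the following are equivalent:
(1) `A` is dynamically central syndetic;
(2) there are a minimal system `(X,T)`, a nonempty open `U ⊆ X` and a point `x ∈ closure U`
    with `R(x,U) ⊆ A`;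
(3) there is `B ⊆ A` such that `1_{B ∪ {0}}` is uniformly recurrent in the full shift
    `({0,1}^{ℕ₀}, σ)`. -/
theorem dynCentralSyndetic_symbolic (A : Set ℕ+) :
    (DynCentralSyndetic A ↔
      ∃ (S : MinSystem) (U : Set S.X) (x : S.X),
        IsOpen U ∧ U.Nonempty ∧ x ∈ closure U ∧ retTimes S.T x U ⊆ A) ∧
    (DynCentralSyndetic A ↔
      ∃ B : Set ℕ+, B ⊆ A ∧ UniformlyRecurrent shiftMap₀ (indZero B)) := by
  have h1 : DynCentralSyndetic A →
      ∃ (S : MinSystem) (U : Set S.X) (x : S.X),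
        IsOpen U ∧ U.Nonempty ∧ x ∈ closure U ∧ retTimes S.T x U ⊆ A := by
    rintro ⟨S, x, U, hU, hxU, hsub⟩
    exact ⟨S, U, x, hU, ⟨x, hxU⟩, subset_closure hxU, hsub⟩
  have h2 : (∃ (S : MinSystem) (U : Set S.X) (x : S.X),
      IsOpen U ∧ U.Nonempty ∧ x ∈ closure U ∧ retTimes S.T x U ⊆ A) →
      ∃ B : Set ℕ+, B ⊆ A ∧ UniformlyRecurrent shiftMap₀ (indZero B) := by
    rintro ⟨S, U, x, hU, _, hxc, hsub⟩
    exact main_to_symbolic S U x hU hxc hsub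
  have h3 : (∃ B : Set ℕ+, B ⊆ A ∧ UniformlyRecurrent shiftMap₀ (indZero B)) →
      DynCentralSyndetic A := by
    rintro ⟨B, hBA, hUR⟩
    exact symbolic_to_dyn hBA hUR
  exact ⟨⟨h1, fun h => h3 (h2 h)⟩, ⟨fun h => h2 (h1 h), h3⟩⟩
end
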